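/- arXiv:1301.3745 — 7 statements merged into one kernel-verified Lean document; each statement's English description precedes it below -/
import Mathlib

section
/- Let θ ∈ (0, π/2) and let x₀, x₁, x₂, x₃ be affinely independent points of ℝ³ (a nondegenerate tetrahedron) satisfying the minimum angle condition with constant θ: (i) for all pairwise distinct indices i, j, k, the face angle ∠(xᵢ xⱼ xₖ) lies in [θ, π − θ]; (ii) for all distinct indices i, j, the distance from xᵢ to the affine span of the other three vertices is at least sin θ · dist(xᵢ, xⱼ). Let B lie in the open segment (x₀, x₁), C in the open segment (x₀, x₂), and D in the open segment (x₀, x₃) (so that B, C, D are the vertices of a triangular planar cross-section of the tetrahedron cutting off the vertex x₀). Then each of the three inner angles of the triangle BCD, namely ∠(C B D), ∠(B C D) and ∠(B D C), is at most φ₀, where φ₀ is the unique φ ∈ (π/2, π) satisfying 4·sin φ/sin θ + 2π − 2φ = θ. In particular each inner angle is at most π − φ_min with φ_min := π − φ₀ > 0 depending only on θ. -/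
/-!
Put `eᵢ = xᵢ - x₀`, `B = x₀ + b e₁`, `C = x₀ + c e₂`, `D = x₀ + d e₃`, so that `∠ C B D` is the
angle between `u = c e₂ - b e₁` and `v = d e₃ - b e₁`. Let `m` be a normal of the face `x₀x₂x₃`
pointing towards `x₁`; the distance condition gives `⟪e₁, m⟫ ≥ sin θ ‖e₁‖ ‖m‖`, and both `u` and
`v` have `m`-component `-b ⟪e₁, m⟫ ≤ 0`. Let `s = π - φ₀` and `t = (θ - s) / 2`.
If `∠(u, e₂) ≥ t`, then `u` is steep, `∠(u, -m) ≤ π/2 - s`, because `sin ∠(u, e₂) ‖u‖ ≤ b ‖e₁‖`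
is the distance from `B` to the line `x₀x₂`; with `∠(-m, v) ≤ π/2` this bounds `∠(u, v)`. The
same holds with `u` and `v` exchanged. Otherwise `u` and `v` lie within `t` of `e₂` and `e₃`,
whose angle is at most `π - θ`, so `∠(u, v) ≤ 2t + π - θ = π - s`.
The equation defining `φ₀` is exactly what makes `sin s ≤ sin θ sin t`.
-/

open Real EuclideanGeometry InnerProductGeometry RealInnerProductSpace

theorem Real.sin_le_sin_of_le_of_le_pi_sub {t δ : ℝ} (ht : -(π / 2) ≤ t) (htδ : t ≤ δ)
    (hδ : δ ≤ π - t) : sin t ≤ sin δ := by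
  rcases le_total δ (π / 2) with h | h
  · exact sin_le_sin_of_le_of_le_pi_div_two ht h htδ
  · rw [← sin_pi_sub δ]
    exact sin_le_sin_of_le_of_le_pi_div_two ht (by linarith) (by linarith)

theorem Real.sin_le_sin_mul_sin_of_four_mul_sin_eq {θ s : ℝ} (hθ0 : 0 < θ) (hθ : θ < π / 2)
    (hs0 : 0 < s) (hs : s < π) (h : 4 * sin s = sin θ * (θ - 2 * s)) :
    sin s ≤ sin θ * sin ((θ - s) / 2) := by
  have hsinθ : 0 < sin θ := sin_pos_of_pos_of_lt_pi hθ0 (by linarith)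
  have h2s : 2 * s < θ := by nlinarith [sin_pos_of_pos_of_lt_pi hs0 hs]
  calc sin s = sin θ * ((θ - 2 * s) / 4) := by linarith
    _ ≤ sin θ * ((θ - s) / π) := by
        refine mul_le_mul_of_nonneg_left ?_ hsinθ.le
        rw [div_le_div_iff₀ (by norm_num) pi_pos]
        nlinarith [pi_le_four]
    _ = sin θ * (2 / π * ((θ - s) / 2)) := by field_simp
    _ ≤ sin θ * sin ((θ - s) / 2) := by
        gcongr
        exact mul_le_sin (by linarith) (by linarith)

section

variable {V : Type*} [NormedAddCommGroup V] [InnerProductSpace ℝ V]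

namespace InnerProductGeometry

theorem angle_le_of_cos_mul_le {x y : V} {ψ : ℝ} (hx : x ≠ 0) (hy : y ≠ 0) (hψ0 : 0 ≤ ψ)
    (hψπ : ψ ≤ π) (h : cos ψ * (‖x‖ * ‖y‖) ≤ ⟪x, y⟫) : angle x y ≤ ψ := by
  rw [angle, ← arccos_cos hψ0 hψπ]
  exact arccos_le_arccos ((le_div_iff₀ (by positivity)).2 h)

theorem sin_angle_mul_norm_le_norm_sub_smul (u f : V) (r : ℝ) :
    sin (angle u f) * ‖u‖ ≤ ‖u - r • f‖ := by
  rcases eq_or_ne f 0 with rfl | hf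
  · simp
  have hlagrange : ⟪u, u⟫ * ⟪f, f⟫ - ⟪u, f⟫ * ⟪u, f⟫ =
      ⟪u - r • f, u - r • f⟫ * ⟪f, f⟫ - ⟪u - r • f, f⟫ * ⟪u - r • f, f⟫ := by
    simp only [inner_sub_left, inner_sub_right, real_inner_smul_left, real_inner_smul_right,
      real_inner_comm u f]
    ring
  have hsin := sin_angle_mul_norm_mul_norm u f
  rw [hlagrange, ← sin_angle_mul_norm_mul_norm] at hsin
  have hf' : 0 < ‖f‖ := norm_pos_iff.2 hf
  refine le_of_mul_le_mul_right ?_ hf'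
  calc sin (angle u f) * ‖u‖ * ‖f‖ = sin (angle (u - r • f) f) * ‖u - r • f‖ * ‖f‖ := by
        rw [mul_assoc, hsin, mul_assoc]
    _ ≤ ‖u - r • f‖ * ‖f‖ := by
        rw [mul_assoc]
        exact mul_le_of_le_one_left (by positivity) (sin_le_one _)

theorem angle_smul_sub_smul_le_pi_sub {e f : V} {b c : ℝ} (he : e ≠ 0) (hb : 0 < b)
    (hc : 0 < c) :
    angle (c • f - b • e) f ≤ π - angle f e := by
  have hsum := angle_add_angle_sub_add_angle_sub_eq_pi (c • f) (smul_ne_zero hb.ne' he)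
  rw [angle_smul_left_of_pos _ _ hc, angle_smul_right_of_pos _ _ hb,
    angle_smul_left_of_pos _ _ hc] at hsum
  rw [angle_comm]
  linarith [angle_nonneg (b • e) (b • e - c • f)]

theorem angle_le_pi_sub_of_inner_le {u v m : V} {s : ℝ} (hs0 : 0 ≤ s) (hs : s ≤ π / 2)
    (hm : m ≠ 0) (hu : sin s * (‖u‖ * ‖m‖) ≤ -⟪u, m⟫) (hv : ⟪v, m⟫ ≤ 0) :
    angle u v ≤ π - s := by
  rcases eq_or_ne u 0 with rfl | hu0
  · rw [angle_zero_left]; linarith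
  rcases eq_or_ne v 0 with rfl | hv0
  · rw [angle_zero_right]; linarith
  have hum : angle u (-m) ≤ π / 2 - s := by
    refine angle_le_of_cos_mul_le hu0 (neg_ne_zero.2 hm) (by linarith) (by linarith) ?_
    rwa [cos_pi_div_two_sub, norm_neg, inner_neg_right]
  have hvm : angle (-m) v ≤ π / 2 := by
    refine angle_le_of_cos_mul_le (neg_ne_zero.2 hm) hv0 (by linarith [pi_pos])
      (by linarith [pi_pos]) ?_
    rw [cos_pi_div_two, zero_mul, inner_neg_left, real_inner_comm]
    linarith
  linarith [angle_le_angle_add_angle u (-m) v]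

theorem sin_mul_norm_mul_norm_le_neg_inner_smul_sub_smul {e f m : V} {b c κ σ : ℝ}
    (hb : 0 ≤ b) (hκ : 0 ≤ κ) (hf : ⟪f, m⟫ = 0) (he : κ * (‖e‖ * ‖m‖) ≤ ⟪e, m⟫)
    (hσ : σ ≤ κ * sin (angle (c • f - b • e) f)) :
    σ * (‖c • f - b • e‖ * ‖m‖) ≤ -⟪c • f - b • e, m⟫ := by
  have hline : sin (angle (c • f - b • e) f) * ‖c • f - b • e‖ ≤ b * ‖e‖ := by
    simpa [norm_smul, abs_of_nonneg hb] using
      sin_angle_mul_norm_le_norm_sub_smul (c • f - b • e) f c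
  calc σ * (‖c • f - b • e‖ * ‖m‖)
      ≤ κ * sin (angle (c • f - b • e) f) * (‖c • f - b • e‖ * ‖m‖) := by gcongr
    _ = κ * (sin (angle (c • f - b • e) f) * ‖c • f - b • e‖) * ‖m‖ := by ring
    _ ≤ κ * (b * ‖e‖) * ‖m‖ := by gcongr
    _ ≤ b * ⟪e, m⟫ := by nlinarith
    _ = -⟪c • f - b • e, m⟫ := by
        rw [inner_sub_left, real_inner_smul_left, real_inner_smul_left, hf]; ring

theorem angle_smul_sub_smul_smul_sub_smul_le {θ s : ℝ} (hθ0 : 0 < θ) (hθ : θ < π) (hs0 : 0 ≤ s)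
    (hs : s ≤ π / 2) (hkey : sin s ≤ sin θ * sin ((θ - s) / 2)) {e₁ e₂ e₃ m : V}
    (he₁ : e₁ ≠ 0) (h23 : angle e₂ e₃ ≤ π - θ) (h21 : θ ≤ angle e₂ e₁) (h31 : θ ≤ angle e₃ e₁)
    (hm : m ≠ 0) (hm₂ : ⟪e₂, m⟫ = 0) (hm₃ : ⟪e₃, m⟫ = 0)
    (hm₁ : sin θ * (‖e₁‖ * ‖m‖) ≤ ⟪e₁, m⟫) {b c d : ℝ} (hb : 0 < b) (hc : 0 < c) (hd : 0 < d) :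
    angle (c • e₂ - b • e₁) (d • e₃ - b • e₁) ≤ π - s := by
  set t := (θ - s) / 2 with ht_def
  have hsinθ : 0 ≤ sin θ := sin_nonneg_of_nonneg_of_le_pi hθ0.le hθ.le
  have hδ₂ := angle_smul_sub_smul_le_pi_sub he₁ hb hc (f := e₂)
  have hδ₃ := angle_smul_sub_smul_le_pi_sub he₁ hb hd (f := e₃)
  have steep : ∀ {f : V} {a : ℝ}, ⟪f, m⟫ = 0 → t ≤ angle (a • f - b • e₁) f →
      angle (a • f - b • e₁) f ≤ π - θ →
      sin s * (‖a • f - b • e₁‖ * ‖m‖) ≤ -⟪a • f - b • e₁, m⟫ := fun hf ht hδ =>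
    sin_mul_norm_mul_norm_le_neg_inner_smul_sub_smul hb.le hsinθ hf hm₁ <| hkey.trans <| by
      gcongr
      exact sin_le_sin_of_le_of_le_pi_sub (by linarith) ht (by linarith)
  have below : ∀ {f : V} {a : ℝ}, ⟪f, m⟫ = 0 → ⟪a • f - b • e₁, m⟫ ≤ 0 := fun hf => by
    simpa using sin_mul_norm_mul_norm_le_neg_inner_smul_sub_smul (σ := 0) hb.le hsinθ hf hm₁
      (mul_nonneg hsinθ (sin_angle_nonneg _ _))
  rcases le_or_gt t (angle (c • e₂ - b • e₁) e₂) with h₂ | h₂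
  · exact angle_le_pi_sub_of_inner_le hs0 hs hm (steep hm₂ h₂ (by linarith)) (below hm₃)
  rcases le_or_gt t (angle (d • e₃ - b • e₁) e₃) with h₃ | h₃
  · rw [angle_comm]
    exact angle_le_pi_sub_of_inner_le hs0 hs hm (steep hm₃ h₃ (by linarith)) (below hm₂)
  have hu := angle_le_angle_add_angle (c • e₂ - b • e₁) e₂ (d • e₃ - b • e₁)
  have hv := angle_le_angle_add_angle e₂ e₃ (d • e₃ - b • e₁)
  rw [angle_comm e₃] at hv
  linarith

end InnerProductGeometry

theorem Submodule.exists_mem_orthogonal_mul_norm_le_inner (K : Submodule ℝ V)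
    [K.HasOrthogonalProjection] {v : V} {r : ℝ} (hr : 0 < r) (h : ∀ w ∈ K, r ≤ ‖v - w‖) :
    ∃ m ∈ Kᗮ, m ≠ 0 ∧ r * ‖m‖ ≤ ⟪v, m⟫ := by
  set m := v - K.starProjection v with hm_def
  have hrm : r ≤ ‖m‖ := h _ (K.starProjection_apply_mem v)
  have hvm : ⟪v, m⟫ = ‖m‖ ^ 2 := by
    have hproj : ⟪K.starProjection v, m⟫ = 0 := K.inner_right_of_mem_orthogonal
      (K.starProjection_apply_mem v) (K.sub_starProjection_mem_orthogonal v)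
    rw [← real_inner_self_eq_norm_sq, ← add_zero ⟪m, m⟫, ← hproj, ← inner_add_left, hm_def,
      sub_add_cancel]
  refine ⟨m, K.sub_starProjection_mem_orthogonal v, norm_pos_iff.1 (hr.trans_le hrm), ?_⟩
  rw [hvm, sq]
  exact mul_le_mul_of_nonneg_right hrm (norm_nonneg m)

theorem AffineSubspace.infDist_le_norm_vsub_sub {P : Type*} [MetricSpace P]
    [NormedAddTorsor V P] {S : AffineSubspace ℝ P} {p : P} (hp : p ∈ S) (q : P) {w : V}
    (hw : w ∈ S.direction) : Metric.infDist q S ≤ ‖q -ᵥ p - w‖ := by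
  rw [← vsub_vadd_eq_vsub_sub, ← dist_eq_norm_vsub]
  exact Metric.infDist_le_dist_of_mem (S.vadd_mem_of_mem_direction hw hp)

theorem EuclideanGeometry.angle_le_pi_sub_of_mem_openSegment [FiniteDimensional ℝ V]
    {θ s : ℝ} (hθ0 : 0 < θ) (hθ : θ < π) (hs0 : 0 ≤ s) (hs : s ≤ π / 2)
    (hkey : sin s ≤ sin θ * sin ((θ - s) / 2)) {p₀ p₁ p₂ p₃ B C D : V}
    {S : AffineSubspace ℝ V} (h₁ : p₁ ≠ p₀) (h₀S : p₀ ∈ S) (h₂S : p₂ ∈ S) (h₃S : p₃ ∈ S)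
    (h23 : ∠ p₂ p₀ p₃ ≤ π - θ) (h21 : θ ≤ ∠ p₂ p₀ p₁) (h31 : θ ≤ ∠ p₃ p₀ p₁)
    (hdist : sin θ * dist p₁ p₀ ≤ Metric.infDist p₁ S) (hB : B ∈ openSegment ℝ p₀ p₁)
    (hC : C ∈ openSegment ℝ p₀ p₂) (hD : D ∈ openSegment ℝ p₀ p₃) : ∠ C B D ≤ π - s := by
  rw [openSegment_eq_image'] at hB hC hD
  obtain ⟨b, ⟨hb, -⟩, rfl⟩ := hB
  obtain ⟨c, ⟨hc, -⟩, rfl⟩ := hC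
  obtain ⟨d, ⟨hd, -⟩, rfl⟩ := hD
  have he₁ : p₁ - p₀ ≠ 0 := sub_ne_zero.2 h₁
  have hsinθ : 0 < sin θ := sin_pos_of_pos_of_lt_pi hθ0 hθ
  obtain ⟨m, hmK, hm, hm₁⟩ := S.direction.exists_mem_orthogonal_mul_norm_le_inner
    (mul_pos hsinθ (norm_pos_iff.2 he₁)) fun w hw ↦ by
      simpa [dist_eq_norm] using hdist.trans (S.infDist_le_norm_vsub_sub h₀S p₁ hw)
  have hperp : ∀ {p}, p ∈ S → ⟪p - p₀, m⟫ = 0 := fun hp ↦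
    S.direction.inner_right_of_mem_orthogonal (S.vsub_mem_direction hp h₀S) hmK
  have hangle : ∠ (p₀ + c • (p₂ - p₀)) (p₀ + b • (p₁ - p₀)) (p₀ + d • (p₃ - p₀)) =
      InnerProductGeometry.angle (c • (p₂ - p₀) - b • (p₁ - p₀))
        (d • (p₃ - p₀) - b • (p₁ - p₀)) := by
    simp only [EuclideanGeometry.angle, vsub_eq_sub, add_sub_add_left_eq_sub]
  rw [hangle]
  exact InnerProductGeometry.angle_smul_sub_smul_smul_sub_smul_le hθ0 hθ hs0 hs hkey he₁ h23 h21
    h31 hm (hperp h₂S) (hperp h₃S) (by rwa [← mul_assoc]) hb hc hd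

end

theorem max_angle_triangular_cross_section (θ : ℝ) (hθ : θ ∈ Set.Ioo 0 (π / 2))
    (x : Fin 4 → EuclideanSpace ℝ (Fin 3))
    (hx : AffineIndependent ℝ x)
    (hface : ∀ i j k : Fin 4, i ≠ j → j ≠ k → i ≠ k →
      ∠ (x i) (x j) (x k) ∈ Set.Icc θ (π - θ))
    (hdist : ∀ i j : Fin 4, i ≠ j →
      Real.sin θ * dist (x i) (x j) ≤
        Metric.infDist (x i)
          (affineSpan ℝ (x '' ({i}ᶜ : Set (Fin 4))) : Set (EuclideanSpace ℝ (Fin 3))))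
    (B C D : EuclideanSpace ℝ (Fin 3))
    (hB : B ∈ openSegment ℝ (x 0) (x 1))
    (hC : C ∈ openSegment ℝ (x 0) (x 2))
    (hD : D ∈ openSegment ℝ (x 0) (x 3)) :
    ∀ φ₀ ∈ Set.Ioo (π / 2) π,
      4 * Real.sin φ₀ / Real.sin θ + 2 * π - 2 * φ₀ = θ →
      ∠ C B D ≤ φ₀ ∧ ∠ B C D ≤ φ₀ ∧ ∠ B D C ≤ φ₀ := by
  obtain ⟨hθ0, hθ1⟩ := hθ
  rintro φ₀ ⟨hφ₁, hφ₂⟩ heq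
  have hkey : sin (π - φ₀) ≤ sin θ * sin ((θ - (π - φ₀)) / 2) := by
    refine sin_le_sin_mul_sin_of_four_mul_sin_eq hθ0 hθ1 (by linarith) (by linarith) ?_
    have hsinθ : sin θ ≠ 0 := (sin_pos_of_pos_of_lt_pi hθ0 (by linarith)).ne'
    rw [sin_pi_sub]
    field_simp at heq
    linarith
  have hvertex : ∀ i j k : Fin 4, i ≠ 0 → j ≠ 0 → k ≠ 0 → i ≠ j → i ≠ k → j ≠ k →
      ∀ {P Q R}, P ∈ openSegment ℝ (x 0) (x i) → Q ∈ openSegment ℝ (x 0) (x j) →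
        R ∈ openSegment ℝ (x 0) (x k) → ∠ Q P R ≤ φ₀ := by
    intro i j k hi hj hk hij hik hjk P Q R hP hQ hR
    have hS : ∀ l, l ≠ i → x l ∈ affineSpan ℝ (x '' {i}ᶜ) := fun l hl ↦
      subset_affineSpan ℝ _ (Set.mem_image_of_mem x hl)
    simpa using angle_le_pi_sub_of_mem_openSegment hθ0 (by linarith) (by linarith)
      (by linarith) hkey (hx.injective.ne hi) (hS 0 hi.symm) (hS j hij.symm) (hS k hik.symm)
      (hface j 0 k hj hk.symm hjk).2 (hface j 0 i hj hi.symm hij.symm).1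
      (hface k 0 i hk hi.symm hik.symm).1 (hdist i 0 hi) hP hQ hR
  refine ⟨hvertex 1 2 3 ?_ ?_ ?_ ?_ ?_ ?_ hB hC hD, hvertex 2 1 3 ?_ ?_ ?_ ?_ ?_ ?_ hC hB hD,
    hvertex 3 1 2 ?_ ?_ ?_ ?_ ?_ ?_ hD hB hC⟩ <;> decide
end

section
/- Let θ ∈ (0, π/2) and let A, B, C, D ∈ ℝ³ be such that A, B, D are affinely independent, C does not lie in the plane Π spanned by A, B, D, the points B, C, D are pairwise distinct, A ≠ C, the angle ∠(D A B) is at most π − θ, and the distance from C to Π is at least sin θ · dist(A, C). Then ∠(B C D) ≤ φ₀, where φ₀ is the unique φ ∈ (π/2, π) satisfying 4·sin φ/sin θ + 2π − 2φ = θ. In particular ∠(B C D) ≤ π − φ_min with φ_min := π − φ₀ > 0 depending only on θ. -/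
set_option maxHeartbeats 1000000

section lemmas
open Real InnerProductGeometry
open scoped RealInnerProductSpace
variable {V : Type*} [NormedAddCommGroup V] [InnerProductSpace ℝ V]

lemma my_arccos_le_arccos {x y : ℝ} (h : x ≤ y) : Real.arccos y ≤ Real.arccos x := by
  simp only [Real.arccos_eq_pi_div_two_sub_arcsin]
  linarith [Real.monotone_arcsin h]

lemma my_gram (x y : V) : ⟪x,x⟫*⟪y,y⟫ - ⟪x,y⟫*⟪x,y⟫
    = ⟪x,x⟫*⟪y-x,y-x⟫ - ⟪x,y-x⟫*⟪x,y-x⟫ := by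
  simp only [inner_sub_left, inner_sub_right]
  rw [real_inner_comm y x]
  ring

lemma my_sin_angle_mul_norm_le (x y : V) (hx : x ≠ 0) :
    Real.sin (angle x y) * ‖y‖ ≤ ‖y - x‖ := by
  have h1 := sin_angle_mul_norm_mul_norm x y
  rw [my_gram] at h1
  have h2 : √(⟪x,x⟫*⟪y-x,y-x⟫ - ⟪x,y-x⟫*⟪x,y-x⟫) ≤ ‖x‖ * ‖y - x‖ := by
    have h3 : ⟪x,x⟫*⟪y-x,y-x⟫ - ⟪x,y-x⟫*⟪x,y-x⟫ ≤ (‖x‖ * ‖y - x‖)^2 := by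
      have := mul_self_nonneg ⟪x,y-x⟫
      rw [real_inner_self_eq_norm_sq, real_inner_self_eq_norm_sq]
      nlinarith
    calc √(⟪x,x⟫*⟪y-x,y-x⟫ - ⟪x,y-x⟫*⟪x,y-x⟫) ≤ √((‖x‖ * ‖y - x‖)^2) :=
          Real.sqrt_le_sqrt h3
      _ = ‖x‖ * ‖y - x‖ := Real.sqrt_sq (by positivity)
  have hx0 : (0:ℝ) < ‖x‖ := norm_pos_iff.2 hx
  rw [← h1] at h2
  have h4 : Real.sin (angle x y) * ‖y‖ * ‖x‖ ≤ ‖y - x‖ * ‖x‖ := by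
    nlinarith
  exact le_of_mul_le_mul_right h4 hx0

lemma my_angle_triangle_unit (u v w : V) (hu : ‖u‖ = 1) (hv : ‖v‖ = 1) (hw : ‖w‖ = 1) :
    angle u w ≤ angle u v + angle v w := by
  rcases le_or_gt π (angle u v + angle v w) with hπ | hπ
  · exact (angle_le_pi u w).trans hπ
  have hiu : ⟪u, u⟫ = 1 := by rw [real_inner_self_eq_norm_sq, hu]; norm_num
  have hiv : ⟪v, v⟫ = 1 := by rw [real_inner_self_eq_norm_sq, hv]; norm_num
  have hiw : ⟪w, w⟫ = 1 := by rw [real_inner_self_eq_norm_sq, hw]; norm_num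
  have hcos1 : Real.cos (angle u v) = ⟪u, v⟫ := by rw [cos_angle, hu, hv]; norm_num
  have hcos2 : Real.cos (angle v w) = ⟪v, w⟫ := by rw [cos_angle, hv, hw]; norm_num
  have hsin1 : Real.sin (angle u v) = √(1 - ⟪u, v⟫ * ⟪u, v⟫) := by
    have := sin_angle_mul_norm_mul_norm u v
    rwa [hu, hv, hiu, hiv, mul_one, mul_one] at this
  have hsin2 : Real.sin (angle v w) = √(1 - ⟪v, w⟫ * ⟪v, w⟫) := by
    have := sin_angle_mul_norm_mul_norm v w
    rwa [hv, hw, hiv, hiw, mul_one, mul_one] at this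
  set p := u - ⟪u, v⟫ • v with hp
  set q := w - ⟪v, w⟫ • v with hq
  have hpq : ⟪p, q⟫ = ⟪u, w⟫ - ⟪u, v⟫ * ⟪v, w⟫ := by
    simp only [hp, hq, inner_sub_left, inner_sub_right, real_inner_smul_left,
      real_inner_smul_right, hiv]
    rw [real_inner_comm v u, real_inner_comm w v]
    ring
  have hpp : ⟪p, p⟫ = 1 - ⟪u, v⟫ * ⟪u, v⟫ := by
    simp only [hp, inner_sub_left, inner_sub_right, real_inner_smul_left,
      real_inner_smul_right, hiu, hiv]
    rw [real_inner_comm v u]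
    ring
  have hqq : ⟪q, q⟫ = 1 - ⟪v, w⟫ * ⟪v, w⟫ := by
    simp only [hq, inner_sub_left, inner_sub_right, real_inner_smul_left,
      real_inner_smul_right, hiw, hiv]
    rw [real_inner_comm w v]
    ring
  have hnp : ‖p‖ = Real.sin (angle u v) := by
    rw [hsin1, ← hpp]
    exact norm_eq_sqrt_real_inner p
  have hnq : ‖q‖ = Real.sin (angle v w) := by
    rw [hsin2, ← hqq]
    exact norm_eq_sqrt_real_inner q
  have hCS : |⟪p, q⟫| ≤ ‖p‖ * ‖q‖ := abs_real_inner_le_norm p q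
  have hkey : Real.cos (angle u v + angle v w) ≤ ⟪u, w⟫ := by
    rw [Real.cos_add, hcos1, hcos2, ← hnp, ← hnq]
    have := (abs_le.1 hCS).1
    rw [hpq] at this
    linarith
  have haw : angle u w = Real.arccos ⟪u, w⟫ := by
    unfold angle
    rw [hu, hw]
    norm_num
  rw [haw, ← Real.arccos_cos (add_nonneg (angle_nonneg u v) (angle_nonneg v w)) hπ.le]
  exact my_arccos_le_arccos hkey

lemma my_angle_triangle (x y z : V) (hx : x ≠ 0) (hy : y ≠ 0) (hz : z ≠ 0) :
    angle x z ≤ angle x y + angle y z := by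
  have hx' : (0:ℝ) < ‖x‖⁻¹ := inv_pos.2 (norm_pos_iff.2 hx)
  have hy' : (0:ℝ) < ‖y‖⁻¹ := inv_pos.2 (norm_pos_iff.2 hy)
  have hz' : (0:ℝ) < ‖z‖⁻¹ := inv_pos.2 (norm_pos_iff.2 hz)
  have h := my_angle_triangle_unit (‖x‖⁻¹ • x) (‖y‖⁻¹ • y) (‖z‖⁻¹ • z)
    (norm_smul_inv_norm hx) (norm_smul_inv_norm hy) (norm_smul_inv_norm hz)
  rwa [angle_smul_left_of_pos _ _ hx', angle_smul_left_of_pos _ _ hx',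
    angle_smul_right_of_pos _ _ hz', angle_smul_right_of_pos _ _ hy',
    angle_smul_left_of_pos _ _ hy', angle_smul_right_of_pos _ _ hz'] at h

lemma my_sin_angle_lb {ν : ℝ} (u v n : V) (hn : ‖n‖ = 1) (hu : u ≠ 0) (hv : v ≠ 0)
    (hν : 0 < ν) (hun : ⟪u, n⟫ = -ν) (hvn : ⟪v, n⟫ = -ν) (ht : ⟪u, v⟫ ≤ 0) :
    ν / ‖u‖ ≤ Real.sin (angle u v) := by
  have hp : 0 < ‖u‖ := norm_pos_iff.2 hu
  have hq : 0 < ‖v‖ := norm_pos_iff.2 hv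
  have hiu : ⟪u, u⟫ = ‖u‖^2 := real_inner_self_eq_norm_sq u
  have hiv : ⟪v, v⟫ = ‖v‖^2 := real_inner_self_eq_norm_sq v
  have hin : ⟪n, n⟫ = 1 := by rw [real_inner_self_eq_norm_sq, hn]; norm_num
  have hvu : ⟪v, u⟫ = ⟪u, v⟫ := real_inner_comm u v
  have hG : 0 ≤ ‖u‖^2*‖v‖^2 - ⟪u, v⟫*⟪u, v⟫ := by
    have := real_inner_mul_inner_self_le u v
    rw [hiu, hiv] at this
    linarith
  have hsin : Real.sin (angle u v) * (‖u‖*‖v‖) = √(‖u‖^2*‖v‖^2 - ⟪u, v⟫*⟪u, v⟫) := by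
    have := sin_angle_mul_norm_mul_norm u v
    rwa [hiu, hiv] at this
  set w := (‖v‖^2) • u - ⟪u, v⟫ • v with hwdef
  have hwn : ⟪w, n⟫ = -(ν*(‖v‖^2 - ⟪u, v⟫)) := by
    simp only [hwdef, inner_sub_left, real_inner_smul_left, hun, hvn]
    ring
  have hww : ⟪w, w⟫ = ‖v‖^2 * (‖u‖^2*‖v‖^2 - ⟪u, v⟫*⟪u, v⟫) := by
    simp only [hwdef, inner_sub_left, inner_sub_right, real_inner_smul_left,
      real_inner_smul_right, hiu, hiv, hvu]
    ring
  have hCS := real_inner_mul_inner_self_le w n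
  rw [hwn, hww, hin, mul_one] at hCS
  have h1 : ν^2 * ‖v‖^2 ≤ ‖u‖^2*‖v‖^2 - ⟪u, v⟫*⟪u, v⟫ := by
    have e1 : ν^2 * (‖v‖^2)^2 ≤ (ν*(‖v‖^2 - ⟪u, v⟫))^2 := by nlinarith [mul_nonneg (mul_nonneg (sq_nonneg ν) (neg_nonneg.2 ht)) (sq_nonneg ‖v‖), mul_nonneg (sq_nonneg ν) (sq_nonneg ⟪u, v⟫)]
    have e2 : ν^2 * ‖v‖^2 * ‖v‖^2 ≤ (‖u‖^2*‖v‖^2 - ⟪u, v⟫*⟪u, v⟫) * ‖v‖^2 := by nlinarith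
    exact le_of_mul_le_mul_right e2 (by positivity)
  have h2 : ν * ‖v‖ ≤ √(‖u‖^2*‖v‖^2 - ⟪u, v⟫*⟪u, v⟫) := by
    have e3 : ν * ‖v‖ = √(ν^2 * ‖v‖^2) := by
      rw [show ν^2*‖v‖^2 = (ν*‖v‖)^2 by ring, Real.sqrt_sq (by positivity)]
    rw [e3]
    exact Real.sqrt_le_sqrt h1
  rw [← hsin] at h2
  rw [div_le_iff₀ hp]
  exact le_of_mul_le_mul_right (by nlinarith) hq

lemma my_obtuse_bound {θ ν : ℝ} (hθ1 : 0 < θ) (hθ2 : θ < π/2) (u v n : V) (hn : ‖n‖ = 1)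
    (hu : u ≠ 0) (hv : v ≠ 0) (hun : ⟪u, n⟫ = -ν) (hvn : ⟪v, n⟫ = -ν) (hν : 0 < ν)
    (hsp : Real.sin θ * ‖u‖ ≤ ν) : angle u v ≤ π - θ := by
  have hp : 0 < ‖u‖ := norm_pos_iff.2 hu
  have hq : 0 < ‖v‖ := norm_pos_iff.2 hv
  have hiu : ⟪u, u⟫ = ‖u‖^2 := real_inner_self_eq_norm_sq u
  have hiv : ⟪v, v⟫ = ‖v‖^2 := real_inner_self_eq_norm_sq v
  have hin : ⟪n, n⟫ = 1 := by rw [real_inner_self_eq_norm_sq, hn]; norm_num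
  have hnu : ⟪n, u⟫ = -ν := by rw [real_inner_comm]; exact hun
  have hnv : ⟪n, v⟫ = -ν := by rw [real_inner_comm]; exact hvn
  have hup : ν ≤ ‖u‖ := by
    have := abs_real_inner_le_norm u n
    rw [hun, hn, mul_one, abs_neg, abs_of_pos hν] at this
    exact this
  have hvq : ν ≤ ‖v‖ := by
    have := abs_real_inner_le_norm v n
    rw [hvn, hn, mul_one, abs_neg, abs_of_pos hν] at this
    exact this
  have hcθ : 0 ≤ Real.cos θ := Real.cos_nonneg_of_mem_Icc ⟨by linarith, hθ2.le⟩
  have hsθ : 0 < Real.sin θ := Real.sin_pos_of_pos_of_lt_pi hθ1 (by linarith [Real.pi_pos])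
  set u' := u + ν • n with hu'def
  set v' := v + ν • n with hv'def
  have h1 : ⟪u', v'⟫ = ⟪u, v⟫ - ν^2 := by
    simp only [hu'def, hv'def, inner_add_left, inner_add_right, real_inner_smul_left,
      real_inner_smul_right, hun, hnv, hin]
    ring
  have h2 : ⟪u', u'⟫ = ‖u‖^2 - ν^2 := by
    simp only [hu'def, inner_add_left, inner_add_right, real_inner_smul_left,
      real_inner_smul_right, hun, hnu, hin, hiu]
    ring
  have h3 : ⟪v', v'⟫ = ‖v‖^2 - ν^2 := by
    simp only [hv'def, inner_add_left, inner_add_right, real_inner_smul_left,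
      real_inner_smul_right, hvn, hnv, hin, hiv]
    ring
  have hCS := real_inner_mul_inner_self_le u' v'
  rw [h1, h2, h3] at hCS
  have hb1 : ‖u‖^2 - ν^2 ≤ Real.cos θ^2 * ‖u‖^2 := by
    have e : (Real.sin θ * ‖u‖)^2 ≤ ν^2 := by
      have h0 : 0 ≤ Real.sin θ * ‖u‖ := by positivity
      nlinarith
    have := Real.sin_sq_add_cos_sq θ
    nlinarith
  have hb2 : ‖v‖^2 - ν^2 ≤ ‖v‖^2 := by nlinarith
  have hprod : (‖u‖^2 - ν^2) * (‖v‖^2 - ν^2) ≤ (Real.cos θ * ‖u‖ * ‖v‖)^2 := by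
    have f1 : 0 ≤ ‖u‖^2 - ν^2 := by nlinarith
    have f2 : 0 ≤ ‖v‖^2 - ν^2 := by nlinarith
    calc (‖u‖^2 - ν^2) * (‖v‖^2 - ν^2) ≤ (Real.cos θ^2 * ‖u‖^2) * ‖v‖^2 :=
          mul_le_mul hb1 hb2 f2 (by positivity)
      _ = (Real.cos θ * ‖u‖ * ‖v‖)^2 := by ring
  have habs : |⟪u, v⟫ - ν^2| ≤ Real.cos θ * ‖u‖ * ‖v‖ := by
    have e1 : |⟪u, v⟫ - ν^2| = √((⟪u, v⟫ - ν^2)^2) := (Real.sqrt_sq_eq_abs _).symm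
    rw [e1]
    calc √((⟪u, v⟫ - ν^2)^2) ≤ √((Real.cos θ * ‖u‖ * ‖v‖)^2) := by
          apply Real.sqrt_le_sqrt
          nlinarith
      _ = Real.cos θ * ‖u‖ * ‖v‖ := Real.sqrt_sq (by positivity)
  have htb : -(Real.cos θ) * (‖u‖ * ‖v‖) ≤ ⟪u, v⟫ := by
    have := (abs_le.1 habs).1
    nlinarith [sq_nonneg ν]
  have hcosb : -Real.cos θ ≤ ⟪u, v⟫ / (‖u‖ * ‖v‖) := by
    rw [le_div_iff₀ (by positivity)]
    linarith
  have hang : angle u v = Real.arccos (⟪u, v⟫ / (‖u‖ * ‖v‖)) := rfl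
  rw [hang]
  calc Real.arccos (⟪u, v⟫ / (‖u‖ * ‖v‖)) ≤ Real.arccos (-Real.cos θ) :=
        my_arccos_le_arccos hcosb
    _ = π - Real.arccos (Real.cos θ) := Real.arccos_neg _
    _ = π - θ := by rw [Real.arccos_cos hθ1.le (by linarith [Real.pi_pos])]

end lemmas

open Real EuclideanGeometry
open scoped InnerProductSpace



local notation "E3" => EuclideanSpace ℝ (Fin 3)

theorem max_angle_triangle_case (θ : ℝ) (hθ : θ ∈ Set.Ioo 0 (π / 2))
    (A B C D : EuclideanSpace ℝ (Fin 3))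
    (hABD : AffineIndependent ℝ ![A, B, D])
    (hC : C ∉ affineSpan ℝ ({A, B, D} : Set (EuclideanSpace ℝ (Fin 3))))
    (hBC : B ≠ C) (hCD : C ≠ D) (hBD : B ≠ D) (hAC : A ≠ C)
    (hDAB : ∠ D A B ≤ π - θ)
    (hdist : Real.sin θ * dist A C ≤
      Metric.infDist C (affineSpan ℝ ({A, B, D} : Set (EuclideanSpace ℝ (Fin 3))) :
        Set (EuclideanSpace ℝ (Fin 3)))) :
    ∀ φ₀ ∈ Set.Ioo (π / 2) π,
      4 * Real.sin φ₀ / Real.sin θ + 2 * π - 2 * φ₀ = θ →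
      ∠ B C D ≤ φ₀ := by
  intro φ₀ hφ₀ heq
  have hπ := Real.pi_pos
  have hsθ : 0 < Real.sin θ := Real.sin_pos_of_pos_of_lt_pi hθ.1 (by linarith [hθ.2])
  -- basic distinctness
  have hAB : A ≠ B := by
    have := hABD.injective.ne (show (0 : Fin 3) ≠ 1 by decide)
    simpa using this
  have hAD : A ≠ D := by
    have := hABD.injective.ne (show (0 : Fin 3) ≠ 2 by decide)
    simpa using this
  -- the plane
  set S := affineSpan ℝ ({A, B, D} : Set E3) with hSdef
  have hAS : A ∈ S := mem_affineSpan ℝ (by simp)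
  have hBS : B ∈ S := mem_affineSpan ℝ (by simp)
  have hDS : D ∈ S := mem_affineSpan ℝ (by simp)
  -- finrank facts
  have hrange : Set.range ![A, B, D] = ({A, B, D} : Set E3) := by
    ext x
    simp [Matrix.range_cons, Matrix.range_empty]
    tauto
  have hfin : Module.finrank ℝ (vectorSpan ℝ ({A, B, D} : Set E3)) = 2 := by
    have h := hABD.finrank_vectorSpan (by simp : Fintype.card (Fin 3) = 2 + 1)
    rwa [hrange] at h
  have hfinperp : Module.finrank ℝ ((vectorSpan ℝ ({A, B, D} : Set E3))ᗮ) = 1 := by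
    have h := Submodule.finrank_add_finrank_orthogonal
      (K := vectorSpan ℝ ({A, B, D} : Set E3))
    rw [hfin, finrank_euclideanSpace_fin] at h
    omega
  -- get a unit normal
  obtain ⟨n₀, hn₀mem, hn₀⟩ : ∃ x ∈ (vectorSpan ℝ ({A, B, D} : Set E3))ᗮ, x ≠ 0 := by
    have hbot : (vectorSpan ℝ ({A, B, D} : Set E3))ᗮ ≠ ⊥ := by
      intro hb
      rw [hb] at hfinperp
      simp at hfinperp
    obtain ⟨x, hx, hx0⟩ := Submodule.exists_mem_ne_zero_of_ne_bot hbot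
    exact ⟨x, hx, hx0⟩
  set n₁ : E3 := ‖n₀‖⁻¹ • n₀ with hn₁def
  have hn₁ : ‖n₁‖ = 1 := norm_smul_inv_norm hn₀
  have hn₁mem : n₁ ∈ (vectorSpan ℝ ({A, B, D} : Set E3))ᗮ :=
    Submodule.smul_mem _ _ hn₀mem
  have hn₁0 : n₁ ≠ 0 := by
    intro h
    rw [h, norm_zero] at hn₁
    norm_num at hn₁
  have hspan : (vectorSpan ℝ ({A, B, D} : Set E3))ᗮ = (ℝ ∙ n₁) := by
    symm
    apply Submodule.eq_of_le_of_finrank_le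
    · exact (Submodule.span_singleton_le_iff_mem _ _).2 hn₁mem
    · rw [hfinperp, finrank_span_singleton hn₁0]
  -- membership criteria
  have hmemV : ∀ x : E3, ⟪n₁, x⟫_ℝ = 0 → x ∈ vectorSpan ℝ ({A, B, D} : Set E3) := by
    intro x hx
    have h1 : x ∈ ((vectorSpan ℝ ({A, B, D} : Set E3))ᗮ)ᗮ := by
      rw [hspan]
      exact (Submodule.mem_orthogonal_singleton_iff_inner_right).2 hx
    rwa [Submodule.orthogonal_orthogonal] at h1
  have hVn : ∀ x ∈ vectorSpan ℝ ({A, B, D} : Set E3), ⟪x, n₁⟫_ℝ = 0 :=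
    (Submodule.mem_orthogonal _ n₁).1 hn₁mem
  have hSsub : ∀ X ∈ S, X - A ∈ vectorSpan ℝ ({A, B, D} : Set E3) := by
    intro X hX
    have h := AffineSubspace.vsub_mem_direction hX hAS
    rwa [hSdef, direction_affineSpan] at h
  have hSmem : ∀ X : E3, ⟪n₁, X - A⟫_ℝ = 0 → X ∈ S := by
    intro X hX
    have h1 : X -ᵥ A ∈ S.direction := by
      rw [hSdef, direction_affineSpan]
      exact hmemV _ hX
    exact (AffineSubspace.vsub_right_mem_direction_iff_mem hAS X).1 h1
  -- nonzero inner product with C - A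
  have hμ : ⟪C - A, n₁⟫_ℝ ≠ 0 := by
    intro h
    exact hC (hSmem C (by rw [real_inner_comm]; exact h))
  -- choose the sign of the normal
  obtain ⟨n, hn, hVn', hνpos, hfootS⟩ :
      ∃ n : E3, ‖n‖ = 1 ∧ (∀ X ∈ S, ⟪X - A, n⟫_ℝ = 0) ∧ 0 < ⟪C - A, n⟫_ℝ ∧
        C - ⟪C - A, n⟫_ℝ • n ∈ S := by
    have hfoot1 : ∀ c : ℝ, c = ⟪C - A, n₁⟫_ℝ → C - c • n₁ ∈ S := by
      intro c hc
      apply hSmem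
      have : ⟪n₁, n₁⟫_ℝ = 1 := by
        rw [real_inner_self_eq_norm_sq, hn₁]; norm_num
      rw [show C - c • n₁ - A = (C - A) - c • n₁ by abel]
      rw [inner_sub_right, real_inner_smul_right, this, real_inner_comm, hc]
      ring
    rcases hμ.lt_or_gt with hneg | hpos
    · refine ⟨-n₁, by rw [norm_neg]; exact hn₁, ?_, ?_, ?_⟩
      · intro X hX
        rw [inner_neg_right, hVn _ (hSsub X hX), neg_zero]
      · rw [inner_neg_right]; linarith
      · rw [inner_neg_right, smul_neg, neg_smul, neg_neg]
        exact hfoot1 _ rfl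
    · exact ⟨n₁, hn₁, fun X hX => hVn _ (hSsub X hX), hpos, hfoot1 _ rfl⟩
  set ν : ℝ := ⟪C - A, n⟫_ℝ with hνdef
  -- infdist bound
  have hνd : Real.sin θ * dist A C ≤ ν := by
    have h1 : Metric.infDist C (S : Set E3) ≤ dist C (C - ν • n) :=
      Metric.infDist_le_dist_of_mem hfootS
    have h2 : dist C (C - ν • n) = ν := by
      rw [dist_eq_norm, show C - (C - ν • n) = ν • n by abel, norm_smul, hn,
        mul_one, Real.norm_eq_abs, abs_of_pos hνpos]
    rw [h2] at h1
    exact le_trans hdist h1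
  -- the two edge vectors from C
  have hu : B - C ≠ 0 := sub_ne_zero.2 hBC
  have hv : D - C ≠ 0 := sub_ne_zero.2 (Ne.symm hCD)
  have hun : ⟪B - C, n⟫_ℝ = -ν := by
    rw [show B - C = (B - A) - (C - A) by abel, inner_sub_left, hVn' B hBS]
    ring
  have hvn : ⟪D - C, n⟫_ℝ = -ν := by
    rw [show D - C = (D - A) - (C - A) by abel, inner_sub_left, hVn' D hDS]
    ring
  have hαvec : ∠ B C D = InnerProductGeometry.angle (B - C) (D - C) := rfl
  have hα0 : 0 ≤ ∠ B C D := angle_nonneg B C D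
  have hαπ : ∠ B C D ≤ π := angle_le_pi B C D
  -- trivial case
  rcases le_or_gt (∠ B C D) (π / 2) with hhalf | hhalf
  · exact hhalf.trans hφ₀.1.le
  -- obtuse case: the inner product is nonpositive
  have ht : ⟪B - C, D - C⟫_ℝ ≤ 0 := by
    have h1 := InnerProductGeometry.cos_angle_mul_norm_mul_norm (B - C) (D - C)
    rw [← hαvec] at h1
    rw [← h1]
    have h2 : Real.cos (∠ B C D) ≤ 0 :=
      Real.cos_nonpos_of_pi_div_two_le_of_le hhalf.le (by linarith)
    exact mul_nonpos_iff.2 (Or.inr ⟨h2, by positivity⟩)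
  have htvu : ⟪D - C, B - C⟫_ℝ ≤ 0 := by rwa [real_inner_comm]
  have hsinα0 : 0 ≤ Real.sin (∠ B C D) := Real.sin_nonneg_of_nonneg_of_le_pi hα0 hαπ
  -- sine lower bounds
  have hs1 : ν / ‖B - C‖ ≤ Real.sin (∠ B C D) := by
    rw [hαvec]
    exact my_sin_angle_lb (B - C) (D - C) n hn hu hv hνpos hun hvn ht
  have hs2 : ν / ‖D - C‖ ≤ Real.sin (∠ B C D) := by
    rw [hαvec, InnerProductGeometry.angle_comm]
    exact my_sin_angle_lb (D - C) (B - C) n hn hv hu hνpos hvn hun htvu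
  have hdAC : dist A C ≤ ν / Real.sin θ := by
    rw [le_div_iff₀ hsθ]
    linarith
  -- the key inequality (★)
  have hstar : θ / 2 ≤ (π - ∠ B C D) + 2 * Real.sin (∠ B C D) / Real.sin θ := by
    have hdivpos : 0 ≤ 2 * Real.sin (∠ B C D) / Real.sin θ := by
      apply div_nonneg _ hsθ.le
      linarith
    -- case: angle at B obtuse
    rcases lt_or_ge (π / 2) (∠ A B C) with hB2 | hB2
    · have hcB : Real.cos (∠ A B C) ≤ 0 :=
        Real.cos_nonpos_of_pi_div_two_le_of_le hB2.le (by linarith [angle_le_pi A B C])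
      have hlc := EuclideanGeometry.law_cos A B C
      have hdd : dist C B ≤ dist A C := by
        nlinarith [dist_nonneg (x := A) (y := B), dist_nonneg (x := C) (y := B),
          dist_nonneg (x := A) (y := C),
          mul_nonneg (mul_nonneg (dist_nonneg (x := A) (y := B))
            (dist_nonneg (x := C) (y := B))) (neg_nonneg.2 hcB)]
      have hsp : Real.sin θ * ‖B - C‖ ≤ ν := by
        rw [← dist_eq_norm, dist_comm B C]
        calc Real.sin θ * dist C B ≤ Real.sin θ * dist A C := by
              apply mul_le_mul_of_nonneg_left hdd hsθ.le
          _ ≤ ν := by linarith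
      have hob : ∠ B C D ≤ π - θ := by
        rw [hαvec]
        exact my_obtuse_bound hθ.1 hθ.2 (B - C) (D - C) n hn hu hv hun hvn hνpos hsp
      linarith
    rcases lt_or_ge (π / 2) (∠ A D C) with hD2 | hD2
    · have hcD : Real.cos (∠ A D C) ≤ 0 :=
        Real.cos_nonpos_of_pi_div_two_le_of_le hD2.le (by linarith [angle_le_pi A D C])
      have hlc := EuclideanGeometry.law_cos A D C
      have hdd : dist C D ≤ dist A C := by
        nlinarith [dist_nonneg (x := A) (y := D), dist_nonneg (x := C) (y := D),
          dist_nonneg (x := A) (y := C),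
          mul_nonneg (mul_nonneg (dist_nonneg (x := A) (y := D))
            (dist_nonneg (x := C) (y := D))) (neg_nonneg.2 hcD)]
      have hsp : Real.sin θ * ‖D - C‖ ≤ ν := by
        rw [← dist_eq_norm, dist_comm D C]
        calc Real.sin θ * dist C D ≤ Real.sin θ * dist A C := by
              apply mul_le_mul_of_nonneg_left hdd hsθ.le
          _ ≤ ν := by linarith
      have hob : ∠ B C D ≤ π - θ := by
        rw [hαvec, InnerProductGeometry.angle_comm]
        exact my_obtuse_bound hθ.1 hθ.2 (D - C) (B - C) n hn hv hu hvn hun hνpos hsp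
      linarith
    -- main case: both base angles acute
    have hBA : B - A ≠ 0 := sub_ne_zero.2 (Ne.symm hAB)
    have hDA : D - A ≠ 0 := sub_ne_zero.2 (Ne.symm hAD)
    -- angle chain
    have hch : InnerProductGeometry.angle (B - C) (D - C) ≤
        ∠ A B C + ∠ B A D + ∠ A D C := by
      have hch1 := my_angle_triangle (B - C) (B - A) (D - C) hu hBA hv
      have hch2 := my_angle_triangle (B - A) (D - A) (D - C) hBA hDA hv
      have e1 : InnerProductGeometry.angle (B - C) (B - A) = ∠ A B C := by
        rw [show B - C = -(C - B) by abel, show B - A = -(A - B) by abel,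
          InnerProductGeometry.angle_neg_neg, InnerProductGeometry.angle_comm]
        rfl
      have e2 : InnerProductGeometry.angle (B - A) (D - A) = ∠ B A D := rfl
      have e3 : InnerProductGeometry.angle (D - A) (D - C) = ∠ A D C := by
        rw [show D - A = -(A - D) by abel, show D - C = -(C - D) by abel,
          InnerProductGeometry.angle_neg_neg]
        rfl
      rw [e1] at hch1
      rw [e2, e3] at hch2
      linarith
    have hBADle : ∠ B A D ≤ π - θ := by
      rw [EuclideanGeometry.angle_comm]
      exact hDAB
    -- law of sines bounds, with Jordan's inequality
    have hsB : Real.sin (∠ A B C) * dist C B ≤ dist C A := by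
      have h1 := my_sin_angle_mul_norm_le (A - B) (C - B) (sub_ne_zero.2 hAB)
      rw [show C - B - (A - B) = C - A by abel] at h1
      have e : InnerProductGeometry.angle (A - B) (C - B) = ∠ A B C := rfl
      rw [e] at h1
      rw [dist_eq_norm, dist_eq_norm]
      exact h1
    have hsD : Real.sin (∠ A D C) * dist C D ≤ dist C A := by
      have h1 := my_sin_angle_mul_norm_le (A - D) (C - D) (sub_ne_zero.2 hAD)
      rw [show C - D - (A - D) = C - A by abel] at h1
      have e : InnerProductGeometry.angle (A - D) (C - D) = ∠ A D C := rfl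
      rw [e] at h1
      rw [dist_eq_norm, dist_eq_norm]
      exact h1
    have hjordan : ∀ x : ℝ, 0 ≤ x → x ≤ π / 2 → x ≤ π / 2 * Real.sin x := by
      intro x h0 h2
      have h := Real.mul_le_sin h0 h2
      have h3 := mul_le_mul_of_nonneg_left h (by positivity : (0:ℝ) ≤ π / 2)
      have h4 : π / 2 * (2 / π * x) = x := by field_simp
      linarith
    have hdCB : (0:ℝ) < dist C B := dist_pos.2 (Ne.symm hBC)
    have hdCD : (0:ℝ) < dist C D := dist_pos.2 hCD
    have hnormu : ‖B - C‖ = dist C B := by rw [dist_eq_norm, norm_sub_rev]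
    have hnormv : ‖D - C‖ = dist C D := by rw [dist_eq_norm, norm_sub_rev]
    have hsinB : Real.sin (∠ A B C) ≤ (ν / ‖B - C‖) / Real.sin θ := by
      rw [hnormu, div_div, le_div_iff₀ (by positivity)]
      calc Real.sin (∠ A B C) * (dist C B * Real.sin θ)
          = Real.sin θ * (Real.sin (∠ A B C) * dist C B) := by ring
        _ ≤ Real.sin θ * dist C A := by
            apply mul_le_mul_of_nonneg_left hsB hsθ.le
        _ ≤ ν := by rw [dist_comm]; linarith
    have hsinD : Real.sin (∠ A D C) ≤ (ν / ‖D - C‖) / Real.sin θ := by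
      rw [hnormv, div_div, le_div_iff₀ (by positivity)]
      calc Real.sin (∠ A D C) * (dist C D * Real.sin θ)
          = Real.sin θ * (Real.sin (∠ A D C) * dist C D) := by ring
        _ ≤ Real.sin θ * dist C A := by
            apply mul_le_mul_of_nonneg_left hsD hsθ.le
        _ ≤ ν := by rw [dist_comm]; linarith
    have hangB : ∠ A B C ≤ π / 2 * ((ν / ‖B - C‖) / Real.sin θ) := by
      calc ∠ A B C ≤ π / 2 * Real.sin (∠ A B C) :=
            hjordan _ (angle_nonneg A B C) hB2
        _ ≤ π / 2 * ((ν / ‖B - C‖) / Real.sin θ) :=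
            mul_le_mul_of_nonneg_left hsinB (by positivity)
    have hangD : ∠ A D C ≤ π / 2 * ((ν / ‖D - C‖) / Real.sin θ) := by
      calc ∠ A D C ≤ π / 2 * Real.sin (∠ A D C) :=
            hjordan _ (angle_nonneg A D C) hD2
        _ ≤ π / 2 * ((ν / ‖D - C‖) / Real.sin θ) :=
            mul_le_mul_of_nonneg_left hsinD (by positivity)
    -- assemble
    set X : ℝ := (ν / ‖B - C‖ + ν / ‖D - C‖) / Real.sin θ with hXdef
    have hX0 : 0 ≤ X := by
      apply div_nonneg _ hsθ.le
      have := norm_pos_iff.2 hu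
      have := norm_pos_iff.2 hv
      positivity
    have hXe : π / 2 * ((ν / ‖B - C‖) / Real.sin θ) +
        π / 2 * ((ν / ‖D - C‖) / Real.sin θ) = π / 2 * X := by
      rw [hXdef]; ring
    have hπα : θ - π / 2 * X ≤ π - ∠ B C D := by
      rw [hαvec]
      linarith [hch]
    have h2s : X ≤ 2 * Real.sin (∠ B C D) / Real.sin θ := by
      rw [hXdef]
      apply div_le_div_of_nonneg_right ?_ hsθ.le
      · linarith
    rcases le_or_gt (θ / 2) X with hc | hc
    · linarith
    · have hmul : (π / 2 - 1) * X ≤ 1 * X :=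
        mul_le_mul_of_nonneg_right (by linarith [Real.pi_le_four]) hX0
      linarith
  -- conclude via monotonicity
  have hε1 : 0 < π - φ₀ := by linarith [hφ₀.2]
  have hε2 : π - φ₀ < π / 2 := by linarith [hφ₀.1]
  have hsinφ : Real.sin φ₀ = Real.sin (π - φ₀) := by rw [Real.sin_pi_sub]
  by_contra hcon
  push_neg at hcon
  have hxε : π - ∠ B C D < π - φ₀ := by linarith
  have hx0 : 0 ≤ π - ∠ B C D := by linarith
  have hsinle : Real.sin (π - ∠ B C D) ≤ Real.sin (π - φ₀) :=
    Real.sin_le_sin_of_le_of_le_pi_div_two (by linarith) hε2.le hxε.le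
  have hsinα : Real.sin (∠ B C D) = Real.sin (π - ∠ B C D) := by
    rw [Real.sin_pi_sub]
  rw [hsinα] at hstar
  have hmono : 2 * Real.sin (π - ∠ B C D) / Real.sin θ ≤
      2 * Real.sin (π - φ₀) / Real.sin θ := by
    gcongr
  rw [hsinφ] at heq
  have e1 : 2 * Real.sin (π - ∠ B C D) / Real.sin θ
      = 2 * (Real.sin (π - ∠ B C D) / Real.sin θ) := by ring
  have e2 : 2 * Real.sin (π - φ₀) / Real.sin θ
      = 2 * (Real.sin (π - φ₀) / Real.sin θ) := by ring
  have e3 : 4 * Real.sin (π - φ₀) / Real.sin θ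
      = 4 * (Real.sin (π - φ₀) / Real.sin θ) := by ring
  rw [e1, e2] at hmono
  rw [e1] at hstar
  rw [e3] at heq
  linarith [hstar, hmono, heq, hxε]
end

section
/- Let θ ∈ (0, π/2) and let A, B, C, D ∈ ℝ³ be such that A, B, D are affinely independent, C does not lie in the plane Π spanned by A, B, D, the points B, C, D are pairwise distinct, A ≠ C, the angle ∠(D A B) is at most π − θ, and the distance from C to Π is at least sin θ · dist(A, C). If moreover φ := ∠(B C D) > π − θ, then θ ≤ 4·sin φ/sin θ + 2π − 2φ. -/
/-! The height of `C` over the plane `ABD` is at most `sin ∠DBC · |BC|` with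
`∠DBC ≤ π - φ ≤ π / 2`, so the height hypothesis gives `sin θ · |AC| ≤ sin φ · |BC|`. Since
`sin φ < sin θ`, this forces `|AC| < |BC|`, so `∠ABC` is acute, and `sin θ · sin ∠ABC ≤ sin φ`;
Jordan's inequality then bounds `∠ABC` by `(π / 2) · sin φ / sin θ`, and likewise `∠ADC`.
The angle sums of the triangles `ABD` and `BCD` and the triangle inequality for angles at `B`
and `D` give `θ ≤ ∠ABD + ∠ADB ≤ ∠ABC + ∠ADC + (π - φ)`. -/

open Real EuclideanGeometry

section InnerProductSpace

open InnerProductGeometry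

variable {V : Type*} [NormedAddCommGroup V] [InnerProductSpace ℝ V]

theorem norm_sub_inner_div_smul_eq_sin_angle_mul_norm (x y : V) :
    ‖y - (inner ℝ x y / ‖x‖ ^ 2) • x‖ = sin (angle x y) * ‖y‖ := by
  rcases eq_or_ne x 0 with rfl | hx
  · simp [angle_zero_left]
  rcases eq_or_ne y 0 with rfl | hy
  · simp
  have hx' : ‖x‖ ≠ 0 := norm_ne_zero_iff.2 hx
  have hy' : ‖y‖ ≠ 0 := norm_ne_zero_iff.2 hy
  rw [← sq_eq_sq₀ (norm_nonneg _) (mul_nonneg (sin_angle_nonneg x y) (norm_nonneg y)),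
    mul_pow, sin_sq, cos_angle, norm_sub_sq_real, inner_smul_right, norm_smul,
    Real.norm_eq_abs, mul_pow, sq_abs, real_inner_comm x y]
  field_simp
  ring

end InnerProductSpace

section EuclideanSpace

variable {V P : Type*} [NormedAddCommGroup V] [InnerProductSpace ℝ V] [MetricSpace P]
  [NormedAddTorsor V P]

theorem infDist_le_sin_angle_mul_dist {s : AffineSubspace ℝ P} {b d : P} (c : P)
    (hb : b ∈ s) (hd : d ∈ s) :
    Metric.infDist c s ≤ sin (∠ d b c) * dist b c := by
  set t := inner ℝ (d -ᵥ b) (c -ᵥ b) / ‖d -ᵥ b‖ ^ 2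
  calc Metric.infDist c s ≤ dist c (t • (d -ᵥ b) +ᵥ b) :=
        Metric.infDist_le_dist_of_mem (s.smul_vsub_vadd_mem t hd hb hb)
    _ = sin (∠ d b c) * dist b c := by
        rw [dist_eq_norm_vsub V, vsub_vadd_eq_vsub_sub, dist_comm, dist_eq_norm_vsub V]
        exact norm_sub_inner_div_smul_eq_sin_angle_mul_norm _ _

theorem sin_angle_mul_dist_le_dist (a b c : P) : sin (∠ a b c) * dist b c ≤ dist a c := by
  rw [sin_angle_mul_dist_eq_sin_angle_mul_dist, dist_comm c a]
  exact mul_le_of_le_one_left dist_nonneg (sin_le_one _)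

theorem angle_lt_pi_div_two_of_dist_lt {a b c : P} (h : dist a c < dist b c) :
    ∠ a b c < π / 2 := by
  by_contra! hge
  have hcos : cos (∠ a b c) ≤ 0 :=
    cos_nonpos_of_pi_div_two_le_of_le hge (by linarith [angle_le_pi a b c, pi_pos])
  have hlaw := law_cos a b c
  rw [dist_comm c b] at hlaw
  nlinarith [mul_nonneg (mul_nonneg (dist_nonneg (x := a) (y := b)) (dist_nonneg (x := b) (y := c)))
    (neg_nonneg.2 hcos), dist_nonneg (x := a) (y := c)]

theorem angle_le_pi_div_two_mul_div_of_mul_dist_le {a b c : P} {κ σ : ℝ} (hac : a ≠ c)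
    (hσ : 0 ≤ σ) (hσκ : σ < κ) (h : κ * dist a c ≤ σ * dist b c) :
    ∠ a b c ≤ π / 2 * σ / κ := by
  have hκ : 0 < κ := hσ.trans_lt hσκ
  have hac' : 0 < dist a c := dist_pos.2 hac
  have hbc : 0 < dist b c := by
    by_contra! h0
    nlinarith [dist_nonneg (x := b) (y := c)]
  have hdist : dist a c < dist b c := by nlinarith
  have hsin : κ * sin (∠ a b c) ≤ σ := by
    nlinarith [sin_angle_mul_dist_le_dist a b c]
  have hjordan : ∠ a b c ≤ π / 2 * sin (∠ a b c) := by
    have := mul_le_sin (angle_nonneg a b c) (angle_lt_pi_div_two_of_dist_lt hdist).le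
    rw [div_mul_eq_mul_div, div_le_iff₀ pi_pos] at this
    linarith
  rw [le_div_iff₀ hκ]
  nlinarith [pi_pos]

end EuclideanSpace

theorem max_angle_key_inequality_general (θ : ℝ) (hθ : θ ∈ Set.Ioo 0 (π / 2))
    (A B C D : EuclideanSpace ℝ (Fin 3))
    (hABD : AffineIndependent ℝ ![A, B, D])
    (hBC : B ≠ C) (hAC : A ≠ C)
    (hDAB : ∠ D A B ≤ π - θ)
    (hdist : Real.sin θ * dist A C ≤
      Metric.infDist C (affineSpan ℝ ({A, B, D} : Set (EuclideanSpace ℝ (Fin 3))) :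
        Set (EuclideanSpace ℝ (Fin 3))))
    (hφ : π - θ < ∠ B C D) :
    θ ≤ 4 * Real.sin (∠ B C D) / Real.sin θ + 2 * π - 2 * ∠ B C D := by
  have hθπ : θ < π / 2 := hθ.2
  set φ := ∠ B C D
  have hAB : A ≠ B := hABD.injective.ne (show (0 : Fin 3) ≠ 1 by decide)
  have hθABD : θ ≤ ∠ A B D + ∠ A D B := by
    linarith [angle_add_angle_add_angle_eq_pi D hAB.symm, angle_comm B D A, angle_comm D A B]
  have hBCD : ∠ C B D + ∠ C D B = π - φ := by
    linarith [angle_add_angle_add_angle_eq_pi D hBC.symm, angle_comm D B C]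
  have hsinφ0 : 0 ≤ sin φ := InnerProductGeometry.sin_angle_nonneg _ _
  have hsinφ : sin φ < sin θ := by
    rw [← sin_pi_sub]
    exact sin_lt_sin_of_lt_of_le_pi_div_two (by linarith [angle_le_pi B C D]) hθπ.le
      (by linarith)
  have hvertex : ∀ b d, b ∈ affineSpan ℝ {A, B, D} → d ∈ affineSpan ℝ {A, B, D} →
      ∠ C b d ≤ π - φ → ∠ A b C ≤ π / 2 * sin φ / sin θ := by
    intro b d hb hd hbd
    refine angle_le_pi_div_two_mul_div_of_mul_dist_le hAC hsinφ0 hsinφ ?_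
    calc sin θ * dist A C ≤ sin (∠ d b C) * dist b C :=
          hdist.trans (infDist_le_sin_angle_mul_dist C hb hd)
      _ ≤ sin φ * dist b C := by
          gcongr
          rw [← sin_pi_sub φ, angle_comm]
          exact sin_le_sin_of_le_of_le_pi_div_two (by linarith [angle_nonneg C b d, pi_pos])
            (by linarith) hbd
  have hB : B ∈ affineSpan ℝ {A, B, D} := subset_affineSpan ℝ _ (by simp)
  have hD : D ∈ affineSpan ℝ {A, B, D} := subset_affineSpan ℝ _ (by simp)
  have hABC := hvertex B D hB hD (by linarith [angle_nonneg C D B])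
  have hADC := hvertex D B hD hB (by linarith [angle_nonneg C B D])
  have hratio : 0 ≤ sin φ / sin θ := div_nonneg hsinφ0 (hsinφ0.trans hsinφ.le)
  calc θ ≤ ∠ A B C + ∠ C B D + (∠ A D C + ∠ C D B) := by
        linarith [angle_le_angle_add_angle B A C D, angle_le_angle_add_angle D A C B]
    _ ≤ π * (sin φ / sin θ) + (π - φ) := by linarith [mul_div_assoc (π / 2) (sin φ) (sin θ)]
    _ ≤ 4 * sin φ / sin θ + 2 * π - 2 * φ := by
        rw [mul_div_assoc]
        nlinarith [pi_le_four, angle_le_pi B C D]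

theorem max_angle_key_inequality (θ : ℝ) (hθ : θ ∈ Set.Ioo 0 (π / 2))
    (A B C D : EuclideanSpace ℝ (Fin 3))
    (hABD : AffineIndependent ℝ ![A, B, D])
    (hC : C ∉ affineSpan ℝ ({A, B, D} : Set (EuclideanSpace ℝ (Fin 3))))
    (hBC : B ≠ C) (hCD : C ≠ D) (hBD : B ≠ D) (hAC : A ≠ C)
    (hDAB : ∠ D A B ≤ π - θ)
    (hdist : Real.sin θ * dist A C ≤
      Metric.infDist C (affineSpan ℝ ({A, B, D} : Set (EuclideanSpace ℝ (Fin 3))) :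
        Set (EuclideanSpace ℝ (Fin 3))))
    (hφ : π - θ < ∠ B C D) :
    θ ≤ 4 * Real.sin (∠ B C D) / Real.sin θ + 2 * π - 2 * ∠ B C D :=
  max_angle_key_inequality_general θ hθ A B C D hABD hBC hAC hDAB hdist hφ
end

section
/- Let θ ∈ (0, π/2) and let O, A, B ∈ ℝ³ be affinely independent with ∠(O A B) ≥ θ, and let D ∈ ℝ³ not lie in the plane Π spanned by O, A, B, with the distance from D to Π at least sin θ · dist(O, D). Then ∠(D A B) ≥ φ₀, where φ₀ is the unique φ ∈ (0, π/2) satisfying 2·(1 + 1/sin θ)·sin φ = θ. -/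
open Real EuclideanGeometry

local notation "⟪" x ", " y "⟫" => @inner ℝ _ _ x y

section Helpers

variable {V : Type*} [NormedAddCommGroup V] [InnerProductSpace ℝ V]

private lemma jordan_aux {x : ℝ} (h0 : 0 ≤ x) (h2 : x ≤ π / 2) : x ≤ π / 2 * Real.sin x := by
  have h := Real.mul_le_sin h0 h2
  have hπ := Real.pi_pos
  calc x = π / 2 * (2 / π * x) := by field_simp
    _ ≤ π / 2 * Real.sin x := mul_le_mul_of_nonneg_left h (by positivity)

private lemma unit_perp (u v : V) (hu : ‖u‖ = 1) (hv : ‖v‖ = 1) :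
    ‖u - ⟪u, v⟫ • v‖ = Real.sin (InnerProductGeometry.angle u v) := by
  have hcos : Real.cos (InnerProductGeometry.angle u v) = ⟪u, v⟫ := by
    rw [InnerProductGeometry.cos_angle, hu, hv]; simp
  have h1 : ‖u - ⟪u, v⟫ • v‖ ^ 2 = Real.sin (InnerProductGeometry.angle u v) ^ 2 := by
    rw [norm_sub_sq_real, real_inner_smul_right, norm_smul, Real.norm_eq_abs, hv, hu,
      Real.sin_sq, hcos]
    rw [mul_one, sq_abs]; ring
  have h2 : 0 ≤ Real.sin (InnerProductGeometry.angle u v) :=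
    Real.sin_nonneg_of_nonneg_of_le_pi (InnerProductGeometry.angle_nonneg u v)
      (InnerProductGeometry.angle_le_pi u v)
  rw [← Real.sqrt_sq (norm_nonneg (u - ⟪u, v⟫ • v)), h1, Real.sqrt_sq h2]

private lemma angle_triangle_unit (u v w : V) (hu : ‖u‖ = 1) (hv : ‖v‖ = 1) (hw : ‖w‖ = 1) :
    InnerProductGeometry.angle u w ≤
      InnerProductGeometry.angle u v + InnerProductGeometry.angle v w := by
  set α := InnerProductGeometry.angle u v with hα
  set β := InnerProductGeometry.angle v w with hβ
  have hα0 : 0 ≤ α := InnerProductGeometry.angle_nonneg u v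
  have hβ0 : 0 ≤ β := InnerProductGeometry.angle_nonneg v w
  rcases le_or_gt π (α + β) with hsum | hsum
  · exact (InnerProductGeometry.angle_le_pi u w).trans (by linarith)
  · have hcu : Real.cos α = ⟪u, v⟫ := by
      rw [hα, InnerProductGeometry.cos_angle, hu, hv]; simp
    have hcw : Real.cos β = ⟪v, w⟫ := by
      rw [hβ, InnerProductGeometry.cos_angle, hv, hw]; simp
    have hcuw : Real.cos (InnerProductGeometry.angle u w) = ⟪u, w⟫ := by
      rw [InnerProductGeometry.cos_angle, hu, hw]; simp
    have hsu : Real.sin α = ‖u - ⟪u, v⟫ • v‖ := (unit_perp u v hu hv).symm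
    have hsw : Real.sin β = ‖w - ⟪w, v⟫ • v‖ := by
      rw [hβ, InnerProductGeometry.angle_comm]; exact (unit_perp w v hw hv).symm
    have hvv : ⟪v, v⟫ = (1 : ℝ) := by
      rw [real_inner_self_eq_norm_sq, hv]; norm_num
    have hinner : ⟪u - ⟪u, v⟫ • v, w - ⟪w, v⟫ • v⟫ = ⟪u, w⟫ - ⟪u, v⟫ * ⟪v, w⟫ := by
      simp only [inner_sub_left, inner_sub_right, real_inner_smul_left, real_inner_smul_right,
        hvv]
      rw [real_inner_comm w v]
      ring
    have hCS : -(‖u - ⟪u, v⟫ • v‖ * ‖w - ⟪w, v⟫ • v‖) ≤ ⟪u - ⟪u, v⟫ • v, w - ⟪w, v⟫ • v⟫ :=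
      neg_abs_le _ |>.trans' (by
        have := abs_real_inner_le_norm (u - ⟪u, v⟫ • v) (w - ⟪w, v⟫ • v)
        linarith [neg_abs_le ⟪u - ⟪u, v⟫ • v, w - ⟪w, v⟫ • v⟫])
    have hkey : Real.cos (α + β) ≤ Real.cos (InnerProductGeometry.angle u w) := by
      rw [Real.cos_add, hcuw, hcu, hcw, hsu, hsw]
      rw [hinner] at hCS
      linarith
    by_contra hlt
    push_neg at hlt
    have hmono := Real.strictAntiOn_cos
      (Set.mem_Icc.2 ⟨by linarith, hsum.le⟩)
      (Set.mem_Icc.2 ⟨InnerProductGeometry.angle_nonneg u w,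
        InnerProductGeometry.angle_le_pi u w⟩) hlt
    linarith

private lemma angle_triangle (u v w : V) :
    InnerProductGeometry.angle u w ≤
      InnerProductGeometry.angle u v + InnerProductGeometry.angle v w := by
  rcases eq_or_ne u 0 with rfl | hu
  · rw [InnerProductGeometry.angle_zero_left, InnerProductGeometry.angle_zero_left]
    linarith [InnerProductGeometry.angle_nonneg v w]
  rcases eq_or_ne w 0 with rfl | hw
  · rw [InnerProductGeometry.angle_zero_right, InnerProductGeometry.angle_zero_right]
    linarith [InnerProductGeometry.angle_nonneg u v]
  rcases eq_or_ne v 0 with rfl | hv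
  · rw [InnerProductGeometry.angle_zero_right, InnerProductGeometry.angle_zero_left]
    linarith [InnerProductGeometry.angle_le_pi u w]
  · have hupos : (0 : ℝ) < ‖u‖⁻¹ := inv_pos.2 (norm_pos_iff.2 hu)
    have hvpos : (0 : ℝ) < ‖v‖⁻¹ := inv_pos.2 (norm_pos_iff.2 hv)
    have hwpos : (0 : ℝ) < ‖w‖⁻¹ := inv_pos.2 (norm_pos_iff.2 hw)
    have h := angle_triangle_unit (‖u‖⁻¹ • u) (‖v‖⁻¹ • v) (‖w‖⁻¹ • w)
      (norm_smul_inv_norm hu) (norm_smul_inv_norm hv) (norm_smul_inv_norm hw)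
    rwa [InnerProductGeometry.angle_smul_left_of_pos _ _ hupos,
      InnerProductGeometry.angle_smul_left_of_pos _ _ hvpos,
      InnerProductGeometry.angle_smul_right_of_pos _ _ hvpos,
      InnerProductGeometry.angle_smul_right_of_pos _ _ hwpos,
      InnerProductGeometry.angle_smul_right_of_pos _ _ hwpos,
      InnerProductGeometry.angle_smul_left_of_pos _ _ hupos] at h

private lemma sin_mul_norm_le (u v : V) (c : ℝ) :
    Real.sin (InnerProductGeometry.angle u v) * ‖u‖ ≤ ‖u - c • v‖ := by
  have hsin0 : 0 ≤ Real.sin (InnerProductGeometry.angle u v) :=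
    Real.sin_nonneg_of_nonneg_of_le_pi (InnerProductGeometry.angle_nonneg u v)
      (InnerProductGeometry.angle_le_pi u v)
  have hsin1 : Real.sin (InnerProductGeometry.angle u v) ≤ 1 := Real.sin_le_one _
  rcases eq_or_ne v 0 with rfl | hv
  · simp only [smul_zero, sub_zero]
    exact mul_le_of_le_one_left (norm_nonneg u) hsin1
  rcases eq_or_ne u 0 with rfl | hu
  · simp only [norm_zero, mul_zero]
    positivity
  have hr : (0 : ℝ) < ‖u‖ := norm_pos_iff.2 hu
  have hs : (0 : ℝ) < ‖v‖ := norm_pos_iff.2 hv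
  have hcos := InnerProductGeometry.cos_angle u v
  have hkey : Real.sin (InnerProductGeometry.angle u v) ^ 2 * (‖u‖ ^ 2 * ‖v‖ ^ 2)
      = ‖u‖ ^ 2 * ‖v‖ ^ 2 - ⟪u, v⟫ ^ 2 := by
    rw [Real.sin_sq, hcos]
    field_simp
  have hexp : ‖u - c • v‖ ^ 2 = ‖u‖ ^ 2 - 2 * (c * ⟪u, v⟫) + c ^ 2 * ‖v‖ ^ 2 := by
    rw [norm_sub_sq_real, real_inner_smul_right, norm_smul, Real.norm_eq_abs, mul_pow, sq_abs]
  have hsq : (Real.sin (InnerProductGeometry.angle u v) * ‖u‖) ^ 2 ≤ ‖u - c • v‖ ^ 2 := by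
    rw [hexp, mul_pow]
    nlinarith [hkey, sq_nonneg (c * ‖v‖ ^ 2 - ⟪u, v⟫), mul_pos hs hs, sq_nonneg ⟪u, v⟫]
  have h := Real.sqrt_le_sqrt hsq
  rwa [Real.sqrt_sq (by positivity), Real.sqrt_sq (norm_nonneg _)] at h

private lemma proj_dist (u v : V) (hv : v ≠ 0) :
    ‖u - (⟪u, v⟫ / ‖v‖ ^ 2) • v‖ = Real.sin (InnerProductGeometry.angle u v) * ‖u‖ := by
  have hsin0 : 0 ≤ Real.sin (InnerProductGeometry.angle u v) :=
    Real.sin_nonneg_of_nonneg_of_le_pi (InnerProductGeometry.angle_nonneg u v)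
      (InnerProductGeometry.angle_le_pi u v)
  rcases eq_or_ne u 0 with rfl | hu
  · simp
  have hr : (0 : ℝ) < ‖u‖ := norm_pos_iff.2 hu
  have hs : (0 : ℝ) < ‖v‖ := norm_pos_iff.2 hv
  have hcos := InnerProductGeometry.cos_angle u v
  have hkey : Real.sin (InnerProductGeometry.angle u v) ^ 2 * (‖u‖ ^ 2 * ‖v‖ ^ 2)
      = ‖u‖ ^ 2 * ‖v‖ ^ 2 - ⟪u, v⟫ ^ 2 := by
    rw [Real.sin_sq, hcos]
    field_simp
  have hexp : ‖u - (⟪u, v⟫ / ‖v‖ ^ 2) • v‖ ^ 2 * ‖v‖ ^ 2 = ‖u‖ ^ 2 * ‖v‖ ^ 2 - ⟪u, v⟫ ^ 2 := by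
    rw [norm_sub_sq_real, real_inner_smul_right, norm_smul, Real.norm_eq_abs, mul_pow, sq_abs]
    field_simp
    ring
  have hsq : ‖u - (⟪u, v⟫ / ‖v‖ ^ 2) • v‖ ^ 2
      = (Real.sin (InnerProductGeometry.angle u v) * ‖u‖) ^ 2 := by
    have h2 : ‖u - (⟪u, v⟫ / ‖v‖ ^ 2) • v‖ ^ 2 * ‖v‖ ^ 2
        = (Real.sin (InnerProductGeometry.angle u v) * ‖u‖) ^ 2 * ‖v‖ ^ 2 := by
      rw [hexp, mul_pow]
      linarith [hkey]
    exact mul_right_cancel₀ (by positivity) h2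
  rw [← Real.sqrt_sq (norm_nonneg (u - (⟪u, v⟫ / ‖v‖ ^ 2) • v)), hsq,
    Real.sqrt_sq (by positivity)]

end Helpers

set_option maxHeartbeats 1000000 in
theorem min_angle_quad_abstract (θ : ℝ) (hθ : θ ∈ Set.Ioo 0 (π / 2))
    (O A B D : EuclideanSpace ℝ (Fin 3))
    (hOAB : AffineIndependent ℝ ![O, A, B])
    (hangle : θ ≤ ∠ O A B)
    (hD : D ∉ affineSpan ℝ ({O, A, B} : Set (EuclideanSpace ℝ (Fin 3))))
    (hdist : Real.sin θ * dist O D ≤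
      Metric.infDist D (affineSpan ℝ ({O, A, B} : Set (EuclideanSpace ℝ (Fin 3))) :
        Set (EuclideanSpace ℝ (Fin 3)))) :
    ∀ φ₀ ∈ Set.Ioo 0 (π / 2),
      2 * (1 + 1 / Real.sin θ) * Real.sin φ₀ = θ →
      φ₀ ≤ ∠ D A B := by
  obtain ⟨hθ0, hθ2⟩ := hθ
  intro φ₀ hφ₀ heq
  obtain ⟨hφ0, hφ2⟩ := hφ₀
  by_contra hcon
  push_neg at hcon
  have hpi := Real.pi_pos
  have hπ4 : π < 3.15 := Real.pi_lt_d2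
  set s := affineSpan ℝ ({O, A, B} : Set (EuclideanSpace ℝ (Fin 3))) with hsdef
  have hA : A ∈ s := subset_affineSpan ℝ _ (by simp)
  have hB : B ∈ s := subset_affineSpan ℝ _ (by simp)
  have hsθ : 0 < Real.sin θ := Real.sin_pos_of_pos_of_lt_pi hθ0 (by linarith)
  have hsθ1 : Real.sin θ ≤ 1 := Real.sin_le_one θ
  have hsφ : 0 < Real.sin φ₀ := Real.sin_pos_of_pos_of_lt_pi hφ0 (by linarith)
  have hDA : D ≠ A := fun h => hD (h ▸ hA)
  have hBA : B ≠ A := by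
    intro h
    have h2 := hOAB.injective (show ![O, A, B] 2 = ![O, A, B] 1 by simpa using h)
    simp at h2
  have hOA : O ≠ A := by
    intro h
    have h2 := hOAB.injective (show ![O, A, B] 0 = ![O, A, B] 1 by simpa using h)
    simp at h2
  have hu0 : D - A ≠ 0 := sub_ne_zero.2 hDA
  have hv0 : B - A ≠ 0 := sub_ne_zero.2 hBA
  have hw0 : O - A ≠ 0 := sub_ne_zero.2 hOA
  have ht : (0 : ℝ) < ‖D - A‖ := norm_pos_iff.2 hu0
  have hDAB : ∠ D A B = InnerProductGeometry.angle (D - A) (B - A) := rfl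
  have hOABv : ∠ O A B = InnerProductGeometry.angle (O - A) (B - A) := rfl
  have hOADv : ∠ O A D = InnerProductGeometry.angle (O - A) (D - A) := rfl
  have hclosed : IsClosed (s : Set (EuclideanSpace ℝ (Fin 3))) := s.closed_of_finiteDimensional
  have hinf : 0 < Metric.infDist D (s : Set (EuclideanSpace ℝ (Fin 3))) :=
    (hclosed.notMem_iff_infDist_pos ⟨A, hA⟩).1 hD
  -- fact 2 : infDist ≤ sin∠DAB * ‖D - A‖
  set c : ℝ := ⟪D - A, B - A⟫ / ‖B - A‖ ^ 2 with hcdef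
  have hPmem : c • (B -ᵥ A) +ᵥ A ∈ s := s.smul_vsub_vadd_mem c hB hA hA
  have hf2 : Metric.infDist D (s : Set (EuclideanSpace ℝ (Fin 3)))
      ≤ Real.sin (∠ D A B) * ‖D - A‖ := by
    have h1 := Metric.infDist_le_dist_of_mem (x := D) hPmem
    have h2 : dist D (c • (B -ᵥ A) +ᵥ A) = ‖(D - A) - c • (B - A)‖ := by
      rw [dist_eq_norm]
      congr 1
      simp only [vsub_eq_sub, vadd_eq_add]
      abel
    rw [h2] at h1
    rw [hDAB, ← proj_dist (D - A) (B - A) hv0]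
    exact h1
  -- fact 3 : sin∠OAD * ‖D - A‖ ≤ dist O D
  have hf3 : Real.sin (∠ O A D) * ‖D - A‖ ≤ dist O D := by
    have h1 := sin_mul_norm_le (D - A) (O - A) 1
    rw [one_smul] at h1
    have h2 : ‖(D - A) - (O - A)‖ = dist O D := by
      rw [dist_eq_norm, ← norm_neg]
      congr 1
      abel
    rw [hOADv, InnerProductGeometry.angle_comm, ← h2]
    exact h1
  have hDABlt : ∠ D A B < π / 2 := lt_of_lt_of_le hcon hφ2.le
  have hsin_lt : Real.sin (∠ D A B) < Real.sin φ₀ := by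
    apply Real.strictMonoOn_sin
      (Set.mem_Icc.2 ⟨by linarith [angle_nonneg D A B], hDABlt.le⟩)
      (Set.mem_Icc.2 ⟨by linarith, hφ2.le⟩) hcon
  have hh2 : Metric.infDist D (s : Set (EuclideanSpace ℝ (Fin 3)))
      < Real.sin φ₀ * ‖D - A‖ :=
    lt_of_le_of_lt hf2 (by nlinarith)
  have heq' : 2 * Real.sin θ * Real.sin φ₀ + 2 * Real.sin φ₀ = θ * Real.sin θ := by
    field_simp at heq
    linarith
  rcases le_or_gt (∠ O A D) (π / 2) with hcase | hcase
  · -- acute case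
    have j1 : ∠ O A D ≤ π / 2 * Real.sin (∠ O A D) :=
      jordan_aux (angle_nonneg O A D) hcase
    have j2 : ∠ D A B ≤ π / 2 * Real.sin (∠ D A B) :=
      jordan_aux (angle_nonneg D A B) hDABlt.le
    have htri : ∠ O A B ≤ ∠ O A D + ∠ D A B := by
      rw [hDAB, hOABv, hOADv]
      exact angle_triangle (O - A) (D - A) (B - A)
    have k1 : Real.sin θ * (Real.sin (∠ O A D) * ‖D - A‖) ≤ Real.sin θ * dist O D :=
      mul_le_mul_of_nonneg_left hf3 hsθ.le
    have k2 : Real.sin θ * Real.sin (∠ O A D) < Real.sin φ₀ := by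
      have h3 : Real.sin θ * Real.sin (∠ O A D) * ‖D - A‖ < Real.sin φ₀ * ‖D - A‖ := by
        calc Real.sin θ * Real.sin (∠ O A D) * ‖D - A‖
            = Real.sin θ * (Real.sin (∠ O A D) * ‖D - A‖) := by ring
          _ ≤ Real.sin θ * dist O D := k1
          _ ≤ Metric.infDist D (s : Set (EuclideanSpace ℝ (Fin 3))) := hdist
          _ < Real.sin φ₀ * ‖D - A‖ := hh2
      exact lt_of_mul_lt_mul_right h3 (norm_nonneg _)
    have hT : θ ≤ π / 2 * (Real.sin (∠ O A D) + Real.sin (∠ D A B)) := by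
      linarith
    have hSY : Real.sin θ * Real.sin (∠ D A B) < Real.sin θ * Real.sin φ₀ :=
      mul_lt_mul_of_pos_left hsin_lt hsθ
    have hTS : θ * Real.sin θ
        ≤ π / 2 * (Real.sin (∠ O A D) + Real.sin (∠ D A B)) * Real.sin θ :=
      mul_le_mul_of_nonneg_right hT hsθ.le
    have h5 : Real.sin θ * Real.sin (∠ O A D) + Real.sin θ * Real.sin (∠ D A B)
        < θ * Real.sin θ / 2 := by
      linarith
    have h6 : π / 2 * (Real.sin θ * Real.sin (∠ O A D) + Real.sin θ * Real.sin (∠ D A B))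
        < π / 2 * (θ * Real.sin θ / 2) :=
      mul_lt_mul_of_pos_left h5 (by positivity)
    have h7 : θ * Real.sin θ < π / 2 * (θ * Real.sin θ / 2) := by
      nlinarith [hTS, h6]
    nlinarith [h7, mul_pos hθ0 hsθ]
  · -- obtuse case
    have hcosn : Real.cos (∠ O A D) ≤ 0 :=
      Real.cos_nonpos_of_pi_div_two_le_of_le hcase.le (by linarith [angle_le_pi O A D])
    have hlaw := EuclideanGeometry.law_cos O A D
    have hdDA : dist D A = ‖D - A‖ := by rw [dist_eq_norm]
    have hsq : ‖D - A‖ ^ 2 ≤ dist O D ^ 2 := by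
      nlinarith [hlaw, hcosn, dist_nonneg (x := O) (y := A), dist_nonneg (x := D) (y := A),
        mul_nonneg (dist_nonneg (x := O) (y := A)) (dist_nonneg (x := D) (y := A))]
    have hODt : ‖D - A‖ ≤ dist O D := by
      have h := Real.sqrt_le_sqrt hsq
      rwa [Real.sqrt_sq (norm_nonneg _), Real.sqrt_sq dist_nonneg] at h
    have hlt : Real.sin θ * ‖D - A‖ < Real.sin φ₀ * ‖D - A‖ :=
      calc Real.sin θ * ‖D - A‖ ≤ Real.sin θ * dist O D :=
            mul_le_mul_of_nonneg_left hODt hsθ.le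
        _ ≤ Metric.infDist D (s : Set (EuclideanSpace ℝ (Fin 3))) := hdist
        _ < Real.sin φ₀ * ‖D - A‖ := hh2
    have hSF : Real.sin θ < Real.sin φ₀ := lt_of_mul_lt_mul_right hlt (norm_nonneg _)
    have hθlt2 : θ * Real.sin θ < 2 * Real.sin θ :=
      mul_lt_mul_of_pos_right (by linarith) hsθ
    nlinarith [heq', hSF, mul_pos hsθ hsφ, hsθ, hθlt2]
end

section
/- Let p₁, p₂, p₃ ∈ ℝ² be affinely independent, let T be the convex hull of {p₁, p₂, p₃}, and let v : ℝ² → ℝ be an affine map with vᵢ := v(pᵢ). Then ∫_T v(x)² dx ≤ (|T|/3)·(v₁² + v₂² + v₃²), where |T| denotes the two-dimensional Lebesgue measure of T and the integral is with respect to Lebesgue measure on ℝ². -/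
/-!
On the triangle `T`, an affine `v` is the convex combination `∑ λᵢ vᵢ` of its vertex values with
the barycentric coordinates `λᵢ` as weights, so Jensen's inequality gives `v² ≤ ∑ λᵢ vᵢ²`
pointwise. Each `λᵢ` integrates to `|T| / 3`: the affine involution exchanging two vertices maps
`T` onto itself and has determinant `±1`, so it preserves Lebesgue measure and all `∫_T λᵢ`
coincide, while `∑ λᵢ = 1` makes them add up to `|T|`.
-/

open MeasureTheory Set Function

namespace AffineBasis

variable {ι k V P W : Type*} [Fintype ι] [Ring k] [AddCommGroup V] [Module k V]
  [AddTorsor V P] [AddCommGroup W] [Module k W] (b : AffineBasis ι k P)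

theorem affineMap_apply_eq_sum_coord_smul (f : P →ᵃ[k] W) (x : P) :
    f x = ∑ i, b.coord i x • f (b i) := by
  have hw := b.sum_coord_apply_eq_one x
  conv_lhs => rw [← b.affineCombination_coord_eq_self x]
  rw [Finset.map_affineCombination _ _ _ hw,
    Finset.univ.affineCombination_eq_linear_combination _ _ hw]
  rfl

theorem affineMap_ext {f g : P →ᵃ[k] W} (h : ∀ i, f (b i) = g (b i)) : f = g := by
  ext x
  rw [b.affineMap_apply_eq_sum_coord_smul f, b.affineMap_apply_eq_sum_coord_smul g]
  simp only [h]

noncomputable def constr (q : ι → W) : P →ᵃ[k] W :=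
  (Fintype.linearCombination k q).toAffineMap.comp b.coords

theorem constr_apply_basis (q : ι → W) (j : ι) : b.constr q (b j) = q j := by
  classical
  simp [constr, Fintype.linearCombination_apply, coords_apply, coord_apply]

end AffineBasis

theorem AffineBasis.convexOn_comp_le_sum_coord_mul {ι E : Type*} [Fintype ι] [AddCommGroup E]
    [Module ℝ E] (b : AffineBasis ι ℝ E) {φ : ℝ → ℝ} (hφ : ConvexOn ℝ univ φ) (f : E →ᵃ[ℝ] ℝ)
    {x : E} (hx : x ∈ convexHull ℝ (range b)) :
    φ (f x) ≤ ∑ i, b.coord i x * φ (f (b i)) := by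
  rw [b.convexHull_eq_nonneg_coord] at hx
  rw [b.affineMap_apply_eq_sum_coord_smul f x]
  exact hφ.map_sum_le (fun i _ => hx i) (b.sum_coord_apply_eq_one x) fun i _ => mem_univ _

theorem AffineMap.abs_det_linear_eq_one_of_involutive {E : Type*} [AddCommGroup E] [Module ℝ E]
    {f : E →ᵃ[ℝ] E} (hf : Involutive f) :
    |LinearMap.det f.linear| = 1 := by
  have hff : f.comp f = AffineMap.id ℝ E := AffineMap.ext hf
  have hsq : LinearMap.det f.linear * LinearMap.det f.linear = 1 := by
    rw [← LinearMap.det_comp, ← AffineMap.comp_linear, hff, AffineMap.id_linear, LinearMap.det_id]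
  rw [← abs_mul_abs_self] at hsq
  nlinarith [abs_nonneg (LinearMap.det f.linear)]

section Haar

variable {E : Type*} [NormedAddCommGroup E] [NormedSpace ℝ E] [FiniteDimensional ℝ E]
  [MeasurableSpace E] [BorelSpace E] (μ : Measure E) [μ.IsAddHaarMeasure]

theorem AffineMap.measurePreserving_of_abs_det_linear_eq_one {f : E →ᵃ[ℝ] E}
    (hf : |LinearMap.det f.linear| = 1) : MeasurePreserving f μ μ := by
  have hdet : LinearMap.det f.linear ≠ 0 := fun h => by simp [h] at hf
  have hlin : MeasurePreserving f.linear μ μ :=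
    ⟨f.linear.continuous_of_finiteDimensional.measurable, by
      rw [Measure.map_linearMap_addHaar_eq_smul_addHaar μ hdet, abs_inv, hf]; simp⟩
  have hdecomp : ⇑f = (· + f 0) ∘ f.linear := f.decomp
  exact hdecomp ▸ (measurePreserving_add_right μ (f 0)).comp hlin

namespace AffineBasis

variable {ι : Type*} [Fintype ι] (b : AffineBasis ι ℝ E)

theorem setIntegral_coord_eq (i j : ι) :
    ∫ x in convexHull ℝ (range b), b.coord i x ∂μ =
      ∫ x in convexHull ℝ (range b), b.coord j x ∂μ := by
  classical
  set σ := b.constr (b ∘ Equiv.swap i j)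
  have hσ : ∀ l, σ (b l) = b (Equiv.swap i j l) := b.constr_apply_basis _
  have hinv : Involutive σ := by
    have hσσ : σ.comp σ = AffineMap.id ℝ E := b.affineMap_ext fun l => by simp [hσ]
    exact fun x => congrArg (· x) hσσ
  have hcoord : (b.coord j).comp σ = b.coord i := b.affineMap_ext fun l => by
    rw [AffineMap.comp_apply, hσ, coord_apply, coord_apply, eq_comm (a := j),
      Equiv.swap_apply_eq_iff, Equiv.swap_apply_right, eq_comm (a := i)]
  have himage : σ '' convexHull ℝ (range b) = convexHull ℝ (range b) := by
    rw [σ.image_convexHull, ← range_comp, show σ ∘ b = b ∘ Equiv.swap i j from funext hσ,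
      (Equiv.swap i j).surjective.range_comp]
  have hmp := AffineMap.measurePreserving_of_abs_det_linear_eq_one μ
    (AffineMap.abs_det_linear_eq_one_of_involutive hinv)
  have hemb := (MeasurableEquiv.ofInvolutive σ hinv
    σ.continuous_of_finiteDimensional.measurable).measurableEmbedding
  calc ∫ x in convexHull ℝ (range b), b.coord i x ∂μ
      = ∫ x in convexHull ℝ (range b), b.coord j (σ x) ∂μ := by rw [← hcoord]; rfl
    _ = ∫ x in σ '' convexHull ℝ (range b), b.coord j x ∂μ :=
        (hmp.setIntegral_image_emb hemb _ _).symm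
    _ = ∫ x in convexHull ℝ (range b), b.coord j x ∂μ := by rw [himage]

theorem setIntegral_coord (i : ι) :
    ∫ x in convexHull ℝ (range b), b.coord i x ∂μ =
      μ.real (convexHull ℝ (range b)) / Fintype.card ι := by
  have hT : IsCompact (convexHull ℝ (range b)) := (finite_range b).isCompact_convexHull (𝕜 := ℝ)
  have hsum : ∑ j, ∫ x in convexHull ℝ (range b), b.coord j x ∂μ =
      μ.real (convexHull ℝ (range b)) := by
    rw [← integral_finsetSum _ fun j _ =>
      (b.coord j).continuous_of_finiteDimensional.continuousOn.integrableOn_compact hT]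
    simp [b.sum_coord_apply_eq_one]
  simp only [b.setIntegral_coord_eq μ _ i, Finset.sum_const, Finset.card_univ,
    nsmul_eq_mul] at hsum
  have hcard : (0 : ℝ) < Fintype.card ι := by
    have := b.nonempty
    exact_mod_cast Fintype.card_pos
  rw [← hsum, mul_div_cancel_left₀ _ hcard.ne']

theorem setIntegral_convexOn_comp_le {φ : ℝ → ℝ} (hφ : ConvexOn ℝ univ φ) (f : E →ᵃ[ℝ] ℝ) :
    ∫ x in convexHull ℝ (range b), φ (f x) ∂μ ≤
      μ.real (convexHull ℝ (range b)) / Fintype.card ι * ∑ i, φ (f (b i)) := by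
  have hT : IsCompact (convexHull ℝ (range b)) := (finite_range b).isCompact_convexHull (𝕜 := ℝ)
  have hφ_cont : Continuous φ := continuousOn_univ.mp (hφ.continuousOn isOpen_univ)
  have hcoord_int : ∀ i, IntegrableOn (b.coord i) (convexHull ℝ (range b)) μ := fun i =>
    (b.coord i).continuous_of_finiteDimensional.continuousOn.integrableOn_compact hT
  calc ∫ x in convexHull ℝ (range b), φ (f x) ∂μ
      ≤ ∫ x in convexHull ℝ (range b), ∑ i, b.coord i x * φ (f (b i)) ∂μ := by
        refine setIntegral_mono_on ?_ ?_ hT.isClosed.measurableSet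
          fun x hx => b.convexOn_comp_le_sum_coord_mul hφ f hx
        · exact (hφ_cont.comp f.continuous_of_finiteDimensional).continuousOn
            |>.integrableOn_compact hT
        · exact integrable_finsetSum _ fun i _ => (hcoord_int i).mul_const _
    _ = ∑ i, (∫ x in convexHull ℝ (range b), b.coord i x ∂μ) * φ (f (b i)) := by
        rw [integral_finsetSum _ fun i _ => (hcoord_int i).mul_const _]
        simp only [integral_mul_const]
    _ = μ.real (convexHull ℝ (range b)) / Fintype.card ι * ∑ i, φ (f (b i)) := by
        simp only [b.setIntegral_coord μ, Finset.mul_sum]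

end AffineBasis

end Haar

theorem integral_sq_affine_over_triangle_upper
    (p₁ p₂ p₃ : EuclideanSpace ℝ (Fin 2))
    (h : AffineIndependent ℝ ![p₁, p₂, p₃])
    (v : EuclideanSpace ℝ (Fin 2) →ᵃ[ℝ] ℝ) :
    ∫ x in convexHull ℝ ({p₁, p₂, p₃} : Set (EuclideanSpace ℝ (Fin 2))), (v x) ^ 2 ≤
      (volume (convexHull ℝ ({p₁, p₂, p₃} : Set (EuclideanSpace ℝ (Fin 2))))).toReal / 3 *
        (v p₁ ^ 2 + v p₂ ^ 2 + v p₃ ^ 2) := by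
  have hspan : affineSpan ℝ (range ![p₁, p₂, p₃]) = ⊤ :=
    h.affineSpan_eq_top_iff_card_eq_finrank_add_one.mpr (by simp)
  let b : AffineBasis (Fin 3) ℝ (EuclideanSpace ℝ (Fin 2)) := ⟨![p₁, p₂, p₃], h, hspan⟩
  have hb : ⇑b = ![p₁, p₂, p₃] := rfl
  have hrange : range b = {p₁, p₂, p₃} := by
    rw [hb, Matrix.range_cons, Matrix.range_cons, Matrix.range_cons_empty, singleton_union,
      singleton_union]
  have key := b.setIntegral_convexOn_comp_le volume even_two.convexOn_pow v
  rw [hrange, Fintype.card_fin, Fin.sum_univ_three, measureReal_def] at key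
  simpa [hb] using key
end

section
/- Let p₁, p₂, p₃ ∈ ℝ² be affinely independent, let T be the convex hull of {p₁, p₂, p₃}, and let v : ℝ² → ℝ be an affine map with vᵢ := v(pᵢ). Then ∫_T v(x)² dx ≥ (|T|/(6·(√2 + 2)))·(v₁² + v₂² + v₃²), where |T| denotes the two-dimensional Lebesgue measure of T and the integral is with respect to Lebesgue measure on ℝ². -/
/-!
An affine map with linear part `L` carries the unit triangle onto `T`, so `|T| = |det L| / 2` and
`∫_T v² = |det L| ∫ (a + b x + c y)²` over the unit triangle (when `det L = 0`, `T` is null and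
both sides vanish). An iterated integral then gives the P1 mass matrix identity
`∫_T v² = |T|/6 (v₁² + v₂² + v₃² + v₁v₂ + v₂v₃ + v₃v₁) = |T|/12 (∑ vᵢ² + (∑ vᵢ)²) ≥ |T|/12 ∑ vᵢ²`,
and `12 ≤ 6 (√2 + 2)`.
-/

open MeasureTheory Set

section
variable {E F : Type*} [NormedAddCommGroup E] [NormedSpace ℝ E] [FiniteDimensional ℝ E]
  [MeasurableSpace E] [BorelSpace E] (μ : Measure E) [μ.IsAddHaarMeasure]

theorem addHaar_image_affineMap (f : E →ᵃ[ℝ] E) (s : Set E) :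
    μ (f '' s) = ENNReal.ofReal |LinearMap.det f.linear| * μ s := by
  have hf : ⇑f = (· + f 0) ∘ f.linear := funext fun x => congrFun f.decomp x
  rw [hf, image_comp, image_add_right, measure_preimage_add_right,
    Measure.addHaar_image_linearMap]

theorem addHaar_real_image_affineMap (f : E →ᵃ[ℝ] E) (s : Set E) :
    μ.real (f '' s) = |LinearMap.det f.linear| * μ.real s := by
  simp [measureReal_def, addHaar_image_affineMap, ENNReal.toReal_mul]

theorem setIntegral_image_affineMap [NormedAddCommGroup F] [NormedSpace ℝ F] (f : E →ᵃ[ℝ] E)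
    {s : Set E} (hs : MeasurableSet s) (g : E → F) :
    ∫ x in f '' s, g x ∂μ = |LinearMap.det f.linear| • ∫ x in s, g (f x) ∂μ := by
  by_cases hdet : LinearMap.det f.linear = 0
  · have : μ (f '' s) = 0 := by simp [addHaar_image_affineMap, hdet]
    simp [Measure.restrict_eq_zero.2 this, hdet]
  · have hinj : Function.Injective f :=
      (AffineMap.linear_injective_iff f).1 (LinearMap.equivOfDetNeZero _ hdet).injective
    have hderiv : ∀ x, HasFDerivAt f (LinearMap.toContinuousLinearMap f.linear) x := fun x => by
      rw [f.decomp]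
      exact (LinearMap.toContinuousLinearMap f.linear).hasFDerivAt.add_const (f 0)
    rw [integral_image_eq_integral_abs_det_fderiv_smul μ hs
      (fun x _ => (hderiv x).hasFDerivWithinAt) hinj.injOn, integral_smul]
    rfl
end


theorem intervalIntegral_sq_linear (p c u : ℝ) :
    ∫ y in (0 : ℝ)..u, (p + c * y) ^ 2 = p ^ 2 * u + p * c * u ^ 2 + c ^ 2 * u ^ 3 / 3 := by
  have hderiv : ∀ y, HasDerivAt (fun t => p ^ 2 * t + p * c * t ^ 2 + c ^ 2 * t ^ 3 / 3)
      ((p + c * y) ^ 2) y := fun y =>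
    ((((hasDerivAt_id y).const_mul (p ^ 2)).add ((hasDerivAt_pow 2 y).const_mul (p * c))).add
      (((hasDerivAt_pow 3 y).const_mul (c ^ 2)).div_const 3)).congr_deriv (by norm_num; ring)
  rw [intervalIntegral.integral_eq_sub_of_hasDerivAt (fun y _ => hderiv y)
    ((by fun_prop : Continuous fun y => (p + c * y) ^ 2).intervalIntegrable _ _)]
  ring

theorem iteratedIntegral_sq_linear_unitTriangle (a b c : ℝ) :
    ∫ x in (0 : ℝ)..1, ∫ y in (0 : ℝ)..(1 - x), (a + b * x + c * y) ^ 2 =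
      (6 * a ^ 2 + 4 * a * b + 4 * a * c + b ^ 2 + b * c + c ^ 2) / 12 := by
  simp only [intervalIntegral_sq_linear]
  set k₁ := a ^ 2 + a * c + c ^ 2 / 3
  set k₂ := -a ^ 2 / 2 + a * b - a * c + b * c / 2 - c ^ 2 / 2
  set k₃ := -2 * a * b / 3 + a * c / 3 + b ^ 2 / 3 - 2 * b * c / 3 + c ^ 2 / 3
  set k₄ := -b ^ 2 / 4 + b * c / 4 - c ^ 2 / 12
  have hderiv : ∀ x, HasDerivAt (fun t => k₁ * t + k₂ * t ^ 2 + k₃ * t ^ 3 + k₄ * t ^ 4)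
      ((a + b * x) ^ 2 * (1 - x) + (a + b * x) * c * (1 - x) ^ 2 + c ^ 2 * (1 - x) ^ 3 / 3) x :=
    fun x => (((((hasDerivAt_id x).const_mul k₁).add ((hasDerivAt_pow 2 x).const_mul k₂)).add
      ((hasDerivAt_pow 3 x).const_mul k₃)).add ((hasDerivAt_pow 4 x).const_mul k₄)).congr_deriv
        (by simp only [k₁, k₂, k₃, k₄]; norm_num; ring)
  rw [intervalIntegral.integral_eq_sub_of_hasDerivAt (fun x _ => hderiv x)
    (Continuous.intervalIntegrable (by fun_prop) _ _)]
  ring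

def unitTriangle : Set (ℝ × ℝ) := {z | 0 ≤ z.1 ∧ 0 ≤ z.2 ∧ z.1 + z.2 ≤ 1}

theorem convexHull_unitTriangle_vertices :
    convexHull ℝ {((0 : ℝ), (0 : ℝ)), (1, 0), (0, 1)} = unitTriangle := by
  apply subset_antisymm
  · refine convexHull_min ?_ ?_
    · rintro z (rfl | rfl | rfl) <;> norm_num [unitTriangle]
    · rintro x ⟨hx₁, hx₂, hx₃⟩ y ⟨hy₁, hy₂, hy₃⟩ s t hs ht hst
      refine ⟨?_, ?_, ?_⟩ <;>
        simp only [Prod.fst_add, Prod.snd_add, Prod.smul_fst, Prod.smul_snd, smul_eq_mul] <;>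
        nlinarith
  · rintro ⟨x, y⟩ ⟨hx, hy, hxy⟩
    have := Finset.centerMass_mem_convexHull (Finset.univ : Finset (Fin 3))
      (w := ![1 - x - y, x, y]) (z := ![((0 : ℝ), (0 : ℝ)), (1, 0), (0, 1)])
      (s := {((0 : ℝ), (0 : ℝ)), (1, 0), (0, 1)})
      (by intro i _; fin_cases i <;> simp <;> linarith)
      (by simp [Fin.sum_univ_three]; linarith)
      (by intro i _; fin_cases i <;> simp)
    convert this using 1
    simp [Finset.centerMass, Fin.sum_univ_three, show 1 - x - y + x + y = 1 by ring]

theorem isCompact_unitTriangle : IsCompact unitTriangle := by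
  rw [← convexHull_unitTriangle_vertices]
  exact (toFinite _).isCompact_convexHull ℝ

theorem measurableSet_unitTriangle : MeasurableSet unitTriangle :=
  isCompact_unitTriangle.isClosed.measurableSet

theorem setIntegral_unitTriangle {g : ℝ × ℝ → ℝ} (hg : Continuous g) :
    ∫ z in unitTriangle, g z = ∫ x in (0 : ℝ)..1, ∫ y in (0 : ℝ)..(1 - x), g (x, y) := by
  have hslice : ∀ x, ∫ y, unitTriangle.indicator g (x, y) =
      (Icc 0 1).indicator (fun x => ∫ y in (0 : ℝ)..(1 - x), g (x, y)) x := by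
    intro x
    by_cases hx : x ∈ Icc 0 1
    · rw [indicator_of_mem hx, intervalIntegral.integral_of_le (by linarith [hx.2]),
        ← integral_Icc_eq_integral_Ioc, ← integral_indicator measurableSet_Icc]
      congr 1 with y
      simp only [unitTriangle, indicator_apply, mem_Icc, mem_ofPred_eq]
      split_ifs <;> grind
    · have hzero : ∀ y, unitTriangle.indicator g (x, y) = 0 := fun y =>
        indicator_of_notMem (fun h => hx ⟨h.1, by linarith [h.2.1, h.2.2]⟩) _
      simp only [indicator_of_notMem hx, hzero, integral_zero]
  have hint : Integrable (unitTriangle.indicator g) (volume.prod volume) := by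
    rw [← Measure.volume_eq_prod, integrable_indicator_iff measurableSet_unitTriangle]
    exact hg.continuousOn.integrableOn_compact isCompact_unitTriangle
  rw [← integral_indicator measurableSet_unitTriangle, Measure.volume_eq_prod,
    integral_prod _ hint]
  simp only [hslice]
  rw [integral_indicator measurableSet_Icc, integral_Icc_eq_integral_Ioc,
    ← intervalIntegral.integral_of_le zero_le_one]

theorem AffineMap.apply_prod_eq (g : ℝ × ℝ →ᵃ[ℝ] ℝ) (z : ℝ × ℝ) :
    g z = g (0, 0) + (g (1, 0) - g (0, 0)) * z.1 + (g (0, 1) - g (0, 0)) * z.2 := by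
  have hdecomp : ∀ w, g w = g.linear w + g (0, 0) := fun w => congrFun g.decomp w
  have hz : z = z.1 • ((1 : ℝ), (0 : ℝ)) + z.2 • ((0 : ℝ), (1 : ℝ)) := by ext <;> simp
  calc g z = g.linear (z.1 • (1, 0) + z.2 • (0, 1)) + g (0, 0) := by rw [← hz, hdecomp]
    _ = _ := by
      rw [map_add, map_smul, map_smul, hdecomp (1, 0), hdecomp (0, 1), smul_eq_mul, smul_eq_mul]
      ring

theorem integral_sq_affineMap_unitTriangle (g : ℝ × ℝ →ᵃ[ℝ] ℝ) :
    ∫ z in unitTriangle, g z ^ 2 = (g (0, 0) ^ 2 + g (1, 0) ^ 2 + g (0, 1) ^ 2 +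
      g (0, 0) * g (1, 0) + g (1, 0) * g (0, 1) + g (0, 1) * g (0, 0)) / 12 := by
  have hg := g.apply_prod_eq
  generalize g (0, 0) = g₀, g (1, 0) = g₁, g (0, 1) = g₂ at hg ⊢
  simp only [hg]
  rw [setIntegral_unitTriangle (by fun_prop), iteratedIntegral_sq_linear_unitTriangle]
  ring

theorem measureReal_unitTriangle : volume.real unitTriangle = 1 / 2 := by
  have := integral_sq_affineMap_unitTriangle (AffineMap.const ℝ (ℝ × ℝ) (1 : ℝ))
  norm_num at this
  linarith

theorem exists_affineMap_unitTriangle_vertices {V : Type*} [AddCommGroup V] [Module ℝ V]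
    (p₁ p₂ p₃ : V) : ∃ f : ℝ × ℝ →ᵃ[ℝ] V, f (0, 0) = p₁ ∧ f (1, 0) = p₂ ∧ f (0, 1) = p₃ :=
  ⟨((LinearMap.fst ℝ ℝ ℝ).smulRight (p₂ - p₁) +
      (LinearMap.snd ℝ ℝ ℝ).smulRight (p₃ - p₁)).toAffineMap + AffineMap.const ℝ _ p₁,
    by simp, by simp, by simp⟩

theorem integral_sq_affineMap_triangle_prod (p₁ p₂ p₃ : ℝ × ℝ) (v : ℝ × ℝ →ᵃ[ℝ] ℝ) :
    ∫ x in convexHull ℝ {p₁, p₂, p₃}, v x ^ 2 = volume.real (convexHull ℝ {p₁, p₂, p₃}) / 6 *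
      (v p₁ ^ 2 + v p₂ ^ 2 + v p₃ ^ 2 + v p₁ * v p₂ + v p₂ * v p₃ + v p₃ * v p₁) := by
  obtain ⟨f, hf₁, hf₂, hf₃⟩ := exists_affineMap_unitTriangle_vertices p₁ p₂ p₃
  have hT : convexHull ℝ {p₁, p₂, p₃} = f '' unitTriangle := by
    rw [← convexHull_unitTriangle_vertices, f.image_convexHull, image_insert_eq, image_insert_eq,
      image_singleton, hf₁, hf₂, hf₃]
  have hvf := integral_sq_affineMap_unitTriangle (v.comp f)
  simp only [AffineMap.comp_apply, hf₁, hf₂, hf₃] at hvf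
  rw [hT, setIntegral_image_affineMap volume f measurableSet_unitTriangle, hvf,
    addHaar_real_image_affineMap, measureReal_unitTriangle, smul_eq_mul]
  ring

theorem integral_sq_affineMap_triangle (p₁ p₂ p₃ : EuclideanSpace ℝ (Fin 2))
    (v : EuclideanSpace ℝ (Fin 2) →ᵃ[ℝ] ℝ) :
    ∫ x in convexHull ℝ {p₁, p₂, p₃}, v x ^ 2 = volume.real (convexHull ℝ {p₁, p₂, p₃}) / 6 *
      (v p₁ ^ 2 + v p₂ ^ 2 + v p₃ ^ 2 + v p₁ * v p₂ + v p₂ * v p₃ + v p₃ * v p₁) := by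
  let e : (ℝ × ℝ) ≃L[ℝ] EuclideanSpace ℝ (Fin 2) :=
    (ContinuousLinearEquiv.finTwoArrow ℝ ℝ).symm.trans (EuclideanSpace.equiv (Fin 2) ℝ).symm
  have hmp : MeasurePreserving e :=
    (PiLp.volume_preserving_toLp (Fin 2)).comp (volume_preserving_finTwoArrow ℝ).symm
  have he : MeasurableEmbedding e := e.toHomeomorph.measurableEmbedding
  have hT : convexHull ℝ {p₁, p₂, p₃} = e '' convexHull ℝ {e.symm p₁, e.symm p₂, e.symm p₃} := by
    rw [IsLinearMap.image_convexHull (f := e) e.toLinearEquiv.toLinearMap.isLinear]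
    simp [image_insert_eq]
  have hvol : ∀ s, volume.real (e '' s) = volume.real s := fun s => by
    simpa using hmp.setIntegral_image_emb he (fun _ => (1 : ℝ)) s
  rw [hT, hmp.setIntegral_image_emb he, hvol]
  simpa using integral_sq_affineMap_triangle_prod (e.symm p₁) (e.symm p₂) (e.symm p₃)
    (v.comp e.toLinearEquiv.toLinearMap.toAffineMap)

theorem integral_sq_affine_over_triangle_lower_general
    (p₁ p₂ p₃ : EuclideanSpace ℝ (Fin 2))
    (v : EuclideanSpace ℝ (Fin 2) →ᵃ[ℝ] ℝ) :
    (volume (convexHull ℝ ({p₁, p₂, p₃} : Set (EuclideanSpace ℝ (Fin 2))))).toReal /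
        (6 * (Real.sqrt 2 + 2)) *
        (v p₁ ^ 2 + v p₂ ^ 2 + v p₃ ^ 2) ≤
      ∫ x in convexHull ℝ ({p₁, p₂, p₃} : Set (EuclideanSpace ℝ (Fin 2))), (v x) ^ 2 := by
  rw [← measureReal_def, integral_sq_affineMap_triangle]
  set A := volume.real (convexHull ℝ ({p₁, p₂, p₃} : Set (EuclideanSpace ℝ (Fin 2))))
  have hA : 0 ≤ A := measureReal_nonneg
  have h12 : (12 : ℝ) ≤ 6 * (Real.sqrt 2 + 2) := by nlinarith [Real.sqrt_nonneg 2]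
  calc A / (6 * (Real.sqrt 2 + 2)) * (v p₁ ^ 2 + v p₂ ^ 2 + v p₃ ^ 2)
      ≤ A / 12 * (v p₁ ^ 2 + v p₂ ^ 2 + v p₃ ^ 2) := by gcongr
    _ ≤ A / 12 * (v p₁ ^ 2 + v p₂ ^ 2 + v p₃ ^ 2) + A / 12 * (v p₁ + v p₂ + v p₃) ^ 2 :=
        le_add_of_nonneg_right (by positivity)
    _ = A / 6 * (v p₁ ^ 2 + v p₂ ^ 2 + v p₃ ^ 2 + v p₁ * v p₂ + v p₂ * v p₃ + v p₃ * v p₁) := by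
        ring

theorem integral_sq_affine_over_triangle_lower
    (p₁ p₂ p₃ : EuclideanSpace ℝ (Fin 2))
    (h : AffineIndependent ℝ ![p₁, p₂, p₃])
    (v : EuclideanSpace ℝ (Fin 2) →ᵃ[ℝ] ℝ) :
    (volume (convexHull ℝ ({p₁, p₂, p₃} : Set (EuclideanSpace ℝ (Fin 2))))).toReal /
        (6 * (Real.sqrt 2 + 2)) *
        (v p₁ ^ 2 + v p₂ ^ 2 + v p₃ ^ 2) ≤
      ∫ x in convexHull ℝ ({p₁, p₂, p₃} : Set (EuclideanSpace ℝ (Fin 2))), (v x) ^ 2 :=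
  integral_sq_affine_over_triangle_lower_general p₁ p₂ p₃ v
end

section
/- For all real numbers v₁, v₂, v₃: v₁² + v₂² + v₃² + v₁v₂ + v₂v₃ + v₃v₁ ≥ (1 − 1/√2)·(v₁² + v₂² + v₃²). -/
theorem sum_sq_add_cross_ge (v₁ v₂ v₃ : ℝ) :
    v₁ ^ 2 + v₂ ^ 2 + v₃ ^ 2 + v₁ * v₂ + v₂ * v₃ + v₃ * v₁ ≥
      (1 - 1 / Real.sqrt 2) * (v₁ ^ 2 + v₂ ^ 2 + v₃ ^ 2) := by
  have hs : Real.sqrt 2 ^ 2 = 2 := Real.sq_sqrt (by norm_num)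
  have hp : (0:ℝ) < Real.sqrt 2 := Real.sqrt_pos.mpr (by norm_num)
  have h1 : (1:ℝ) ≤ Real.sqrt 2 := by nlinarith
  have key : ∀ a b c : ℝ, 0 ≤ a * b →
      Real.sqrt 2 * (a ^ 2 + b ^ 2 + c ^ 2 + (a * b + b * c + c * a)) ≥
        (Real.sqrt 2 - 1) * (a ^ 2 + b ^ 2 + c ^ 2) := by
    intro a b c hab
    nlinarith [sq_nonneg (a + b + Real.sqrt 2 * c), sq_nonneg (a - b),
      mul_nonneg (sub_nonneg.mpr h1) hab]
  have main : Real.sqrt 2 * (v₁ ^ 2 + v₂ ^ 2 + v₃ ^ 2 + (v₁ * v₂ + v₂ * v₃ + v₃ * v₁)) ≥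
      (Real.sqrt 2 - 1) * (v₁ ^ 2 + v₂ ^ 2 + v₃ ^ 2) := by
    rcases le_or_gt 0 (v₁ * v₂) with h | h12
    · exact key v₁ v₂ v₃ h
    rcases le_or_gt 0 (v₂ * v₃) with h | h23
    · have := key v₂ v₃ v₁ h; nlinarith [this]
    have h31 : 0 ≤ v₃ * v₁ := by nlinarith [mul_pos_of_neg_of_neg h12 h23, sq_nonneg v₂]
    have := key v₃ v₁ v₂ h31; nlinarith [this]
  have hinv : Real.sqrt 2 * (1 / Real.sqrt 2) = 1 := mul_one_div_cancel (ne_of_gt hp)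
  nlinarith [main, hp, hinv, mul_pos hp hp]
end
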